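/- arXiv:2501.00976 — 8 statements merged into one kernel-verified Lean document; each statement's English description precedes it below -/
import Mathlib

section
/- If C is an almost isolated clique in the friendship graph with hinge node i, then for any optimal partition π* there exists a coalition C' ∈ π* with C ⊆ C'; furthermore, if i ∉ C', then C' = C. -/
/-!
Write the welfare as `∑ j, faValue n (F j) (π(j) \ {j})`, where friends count `1` and enemies
`-1/n`. For an optimal `π`, cutting a set `S` out of every coalition and adding it as a new
coalition (`Finpartition.isolate`) cannot increase the welfare. If `C` meets the coalition `P` of
the hinge without being contained in it, isolating `C ∪ P` gains at least
`2 |C \ P| (|C ∩ P| - |P \ C| / n) > 0`, as `|P \ C| < n`. If `C` misses `P`, isolating `C` gains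
`|C \ π(j)| + |π(j) \ C| / n ≥ 0` for every `j ∈ C` and loses nothing elsewhere, so all these
gains vanish and `C` is a coalition.
-/

open Finset

/-- FA utility of agent `i` with friend set `t` for a coalition `C` containing her:
`u_i(C) = |C ∩ F_i| − |C ∩ E_i| / n`, where `E_i = N \ (F_i ∪ {i})`. -/
def faUtil (n : ℕ) (t : Finset (Fin n)) (i : Fin n) (C : Finset (Fin n)) : ℚ :=
  ((C ∩ t).card : ℚ) - ((C \ (t ∪ {i})).card : ℚ) / (n : ℚ)

/-- Social welfare of a partition of the agents (`SW(π) = Σ_i u_i(π(i))`). -/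
def faSW (n : ℕ) (F : Fin n → Finset (Fin n))
    (π : Finpartition (univ : Finset (Fin n))) : ℚ :=
  ∑ C ∈ π.parts, ∑ i ∈ C, faUtil n (F i) i C

section FaValue

variable {α : Type*} [DecidableEq α] (n : ℕ) (t : Finset α)

def faValue (T : Finset α) : ℚ :=
  ∑ k ∈ T, if k ∈ t then 1 else -(1 / n : ℚ)

variable {n t}

lemma faValue_inter_add_faValue_sdiff (T U : Finset α) :
    faValue n t (T ∩ U) + faValue n t (T \ U) = faValue n t T :=
  sum_inter_add_sum_sdiff T U _

lemma faValue_of_subset {T : Finset α} (h : T ⊆ t) : faValue n t T = #T := by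
  rw [faValue, sum_congr rfl fun k hk => if_pos (h hk)]
  simp

lemma faValue_of_disjoint {T : Finset α} (h : Disjoint T t) : faValue n t T = -(#T / n) := by
  rw [faValue, sum_congr rfl fun k hk => if_neg (disjoint_left.1 h hk), sum_const, nsmul_eq_mul]
  ring

lemma neg_card_div_le_faValue (T : Finset α) : -(#T / n : ℚ) ≤ faValue n t T := by
  have h := card_nsmul_le_sum T (fun k => if k ∈ t then (1 : ℚ) else -(1 / n)) (-(1 / n)) ?_
  · rw [nsmul_eq_mul] at h
    rw [faValue]
    linarith [show (#T : ℚ) * -(1 / n) = -(#T / n) by ring]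
  · intro k _
    split_ifs
    · have : (0 : ℚ) ≤ 1 / n := by positivity
      linarith
    · rfl

end FaValue

lemma faUtil_eq_faValue {n : ℕ} {t : Finset (Fin n)} {j : Fin n} (hj : j ∉ t)
    (C : Finset (Fin n)) : faUtil n t j C = faValue n t (C.erase j) := by
  rw [← faValue_inter_add_faValue_sdiff _ t, faValue_of_subset inter_subset_right,
    faValue_of_disjoint sdiff_disjoint, faUtil]
  have h₁ : C.erase j ∩ t = C ∩ t := by
    ext k; by_cases hk : k = j <;> simp_all
  have h₂ : C.erase j \ t = C \ (t ∪ {j}) := by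
    ext k; simp only [mem_sdiff, mem_erase, mem_union, mem_singleton]; tauto
  rw [h₁, h₂]
  ring

lemma faSW_eq_sum_faValue {n : ℕ} {F : Fin n → Finset (Fin n)} (hF : ∀ j, j ∉ F j)
    (π : Finpartition (univ : Finset (Fin n))) :
    faSW n F π = ∑ j, faValue n (F j) ((π.part j).erase j) := by
  rw [← sum_congr π.biUnion_parts fun _ _ => rfl, sum_biUnion π.supIndep.pairwiseDisjoint, faSW]
  refine sum_congr rfl fun P hP => sum_congr rfl fun j hj => ?_
  rw [faUtil_eq_faValue (hF j), π.part_eq_of_mem hP hj]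

namespace Finpartition

variable {α : Type*} [DecidableEq α] {s S : Finset α}

def isolate (π : Finpartition s) (hS : S.Nonempty) (hSs : S ⊆ s) : Finpartition s :=
  (π.avoid S).extend hS.ne_empty disjoint_sdiff_self_left (sdiff_sup_cancel hSs)

variable (π : Finpartition s) (hS : S.Nonempty) (hSs : S ⊆ s) {j : α}

lemma part_isolate_of_mem (hj : j ∈ S) : (π.isolate hS hSs).part j = S :=
  part_eq_of_mem _ (by simp [isolate]) hj

lemma part_isolate_of_notMem (hjs : j ∈ s) (hj : j ∉ S) :
    (π.isolate hS hSs).part j = π.part j \ S := by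
  refine part_eq_of_mem _ (mem_insert_of_mem ?_) (mem_sdiff.2 ⟨π.mem_part hjs, hj⟩)
  exact π.mem_avoid.2 ⟨_, π.part_mem.2 hjs, fun h => hj (h (π.mem_part hjs)), rfl⟩

lemma disjoint_part_of_notMem_part {a b : α} (ha : a ∈ s) (hb : b ∈ s)
    (hab : a ∉ π.part b) : Disjoint (π.part a) (π.part b) :=
  π.disjoint (π.part_mem.2 ha) (π.part_mem.2 hb) fun h => hab (h ▸ π.mem_part ha :)

end Finpartition

section Isolate

variable {n : ℕ} {F : Fin n → Finset (Fin n)} {S T : Finset (Fin n)} {j : Fin n}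

lemma faValue_erase_of_mem (hjS : j ∈ S) (hjT : j ∈ T) :
    faValue n (F j) (S.erase j) =
      faValue n (F j) (T.erase j) + (faValue n (F j) (S \ T) - faValue n (F j) (T \ S)) := by
  rw [← faValue_inter_add_faValue_sdiff (S.erase j) T,
    ← faValue_inter_add_faValue_sdiff (T.erase j) S, inter_comm, erase_inter, inter_erase,
    erase_sdiff_comm, erase_sdiff_comm, erase_eq_of_notMem (notMem_sdiff_of_mem_right hjT),
    erase_eq_of_notMem (notMem_sdiff_of_mem_right hjS)]
  ring

lemma faValue_erase_sdiff_of_notMem (hjS : j ∉ S) (T : Finset (Fin n)) :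
    faValue n (F j) ((T \ S).erase j) =
      faValue n (F j) (T.erase j) - faValue n (F j) (T ∩ S) := by
  rw [← faValue_inter_add_faValue_sdiff (T.erase j) S, erase_inter, erase_sdiff_comm,
    erase_eq_of_notMem fun h => hjS (mem_inter.1 h).2]
  ring

lemma faSW_isolate (hF : ∀ j, j ∉ F j) (π : Finpartition (univ : Finset (Fin n)))
    (hS : S.Nonempty) :
    faSW n F (π.isolate hS (subset_univ S)) = faSW n F π
      + ∑ j ∈ S, (faValue n (F j) (S \ π.part j) - faValue n (F j) (π.part j \ S))
      - ∑ j ∈ Sᶜ, faValue n (F j) (π.part j ∩ S) := by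
  have hin : ∑ j ∈ S, faValue n (F j) (((π.isolate hS (subset_univ S)).part j).erase j) =
      ∑ j ∈ S, (faValue n (F j) ((π.part j).erase j)
        + (faValue n (F j) (S \ π.part j) - faValue n (F j) (π.part j \ S))) :=
    sum_congr rfl fun j hj => by
      rw [π.part_isolate_of_mem hS _ hj, faValue_erase_of_mem hj (π.mem_part (mem_univ j))]
  have hout : ∑ j ∈ Sᶜ, faValue n (F j) (((π.isolate hS (subset_univ S)).part j).erase j) =
      ∑ j ∈ Sᶜ, (faValue n (F j) ((π.part j).erase j) - faValue n (F j) (π.part j ∩ S)) :=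
    sum_congr rfl fun j hj => by
      rw [π.part_isolate_of_notMem hS _ (mem_univ j) (mem_compl.1 hj),
        faValue_erase_sdiff_of_notMem (mem_compl.1 hj)]
  rw [faSW_eq_sum_faValue hF, faSW_eq_sum_faValue hF, ← sum_add_sum_compl S, hin, hout,
    ← sum_add_sum_compl S (fun j => faValue n (F j) ((π.part j).erase j)), sum_add_distrib,
    sum_sub_distrib, sum_sub_distrib]
  ring

end Isolate

lemma sum_isolate_gain_le {n : ℕ} {F : Fin n → Finset (Fin n)} (hF : ∀ j, j ∉ F j)
    {π : Finpartition (univ : Finset (Fin n))}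
    (hopt : ∀ σ : Finpartition (univ : Finset (Fin n)), faSW n F σ ≤ faSW n F π)
    {S : Finset (Fin n)} (hS : S.Nonempty) :
    ∑ j ∈ S, (faValue n (F j) (S \ π.part j) - faValue n (F j) (π.part j \ S))
      ≤ ∑ j ∈ Sᶜ, faValue n (F j) (π.part j ∩ S) := by
  have h := hopt (π.isolate hS (subset_univ S))
  rw [faSW_isolate hF] at h
  linarith

section AlmostIsolatedClique

variable {n : ℕ} {F : Fin n → Finset (Fin n)} {C T : Finset (Fin n)} {i j : Fin n}

lemma faValue_of_subset_clique (hclique : ∀ j ∈ C, ∀ k ∈ C, j ≠ k → k ∈ F j)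
    (hj : j ∈ C) (hT : T ⊆ C) (hjT : j ∉ T) : faValue n (F j) T = #T :=
  faValue_of_subset fun k hk => hclique j hj k (hT hk) fun h => hjT (h ▸ hk)

lemma faValue_of_disjoint_clique
    (hisolated : ∀ j ∈ C, ∀ l : Fin n, l ∉ C → l ≠ i → l ∉ F j ∧ j ∉ F l)
    (hj : j ∈ C) (hT : Disjoint T C) (hiT : i ∉ T) : faValue n (F j) T = -(#T / n) :=
  faValue_of_disjoint <| disjoint_left.2 fun k hk =>
    (hisolated j hj k (disjoint_left.1 hT hk) fun h => hiT (h ▸ hk)).1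

lemma faValue_nonpos_of_notMem_clique
    (hisolated : ∀ j ∈ C, ∀ l : Fin n, l ∉ C → l ≠ i → l ∉ F j ∧ j ∉ F l)
    (hj : j ∉ C) (hji : j ≠ i) (hT : T ⊆ C) : faValue n (F j) T ≤ 0 := by
  rw [faValue_of_disjoint <| disjoint_left.2 fun k hk => (hisolated k (hT hk) j hj hji).2,
    neg_nonpos]
  positivity

lemma card_sdiff_mul_le_sum_faValue (hclique : ∀ j ∈ C, ∀ k ∈ C, j ≠ k → k ∈ F j)
    (P : Finset (Fin n)) :
    (#(C \ P) : ℚ) * (#(C ∩ P) - #(P \ C) / n) ≤ ∑ j ∈ P, faValue n (F j) (C \ P) := by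
  rw [← sum_inter_add_sum_sdiff P C, inter_comm C P,
    sum_congr rfl fun j hj => faValue_of_subset_clique hclique (mem_inter.1 hj).2 sdiff_subset
      fun h => (mem_sdiff.1 h).2 (mem_inter.1 hj).1, sum_const, nsmul_eq_mul]
  have h := card_nsmul_le_sum (P \ C) (fun j => faValue n (F j) (C \ P)) _
    fun j _ => neg_card_div_le_faValue (C \ P)
  rw [nsmul_eq_mul] at h
  linarith [show (#(P \ C) : ℚ) * -(#(C \ P) / n) = -(#(C \ P) * (#(P \ C) / n)) by ring]

end AlmostIsolatedClique

section OptimalPartition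

variable {n : ℕ} {F : Fin n → Finset (Fin n)} {C : Finset (Fin n)} {i j : Fin n}
  {π : Finpartition (univ : Finset (Fin n))}

lemma notMem_part_of_disjoint_part (h : Disjoint C (π.part i)) (hj : j ∈ C) :
    i ∉ π.part j := fun hi =>
  disjoint_left.1 h hj <|
    ((π.mem_part_iff_part_eq_part (mem_univ i) (mem_univ j)).1 hi).symm ▸
      π.mem_part (mem_univ j)

lemma clique_mem_parts_of_disjoint_part (hF : ∀ j, j ∉ F j)
    (hclique : ∀ j ∈ C, ∀ k ∈ C, j ≠ k → k ∈ F j)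
    (hisolated : ∀ j ∈ C, ∀ l : Fin n, l ∉ C → l ≠ i → l ∉ F j ∧ j ∉ F l)
    (hopt : ∀ σ : Finpartition (univ : Finset (Fin n)), faSW n F σ ≤ faSW n F π)
    (hC : C.Nonempty) (hCi : Disjoint C (π.part i)) : C ∈ π.parts := by
  have hgain : ∀ j ∈ C, faValue n (F j) (C \ π.part j) - faValue n (F j) (π.part j \ C)
      = #(C \ π.part j) + #(π.part j \ C) / n := fun j hj => by
    rw [faValue_of_subset_clique hclique hj sdiff_subset
        (notMem_sdiff_of_mem_right (π.mem_part (mem_univ j))),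
      faValue_of_disjoint_clique hisolated hj sdiff_disjoint
        (notMem_sdiff_of_notMem_left (notMem_part_of_disjoint_part hCi hj))]
    ring
  have hloss : ∀ j ∈ Cᶜ, faValue n (F j) (π.part j ∩ C) ≤ 0 := fun j hj => by
    by_cases hji : j = i
    · subst hji
      simp [faValue, disjoint_iff_inter_eq_empty.1 hCi.symm]
    · exact faValue_nonpos_of_notMem_clique hisolated (mem_compl.1 hj) hji inter_subset_right
  have hle := sum_isolate_gain_le hF hopt hC
  rw [sum_congr rfl hgain] at hle
  have hterm_nonneg : ∀ j ∈ C, (0 : ℚ) ≤ #(C \ π.part j) + #(π.part j \ C) / n :=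
    fun j _ => by positivity
  have hzero := (sum_eq_zero_iff_of_nonneg hterm_nonneg).1
    (le_antisymm (hle.trans (sum_nonpos hloss)) (sum_nonneg hterm_nonneg))
  obtain ⟨j, hj⟩ := hC
  obtain ⟨hCj, hjC⟩ :=
    (add_eq_zero_iff_of_nonneg (by positivity) (by positivity)).1 (hzero j hj)
  have hn : (n : ℚ) ≠ 0 := Nat.cast_ne_zero.2 j.pos.ne'
  simp only [div_eq_zero_iff, hn, or_false, Nat.cast_eq_zero, card_eq_zero,
    sdiff_eq_empty_iff_subset] at hCj hjC
  exact (subset_antisymm hjC hCj) ▸ π.part_mem.2 (mem_univ j)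

lemma le_isolate_gain_of_mem_clique_sdiff_part
    (hclique : ∀ j ∈ C, ∀ k ∈ C, j ≠ k → k ∈ F j)
    (hisolated : ∀ j ∈ C, ∀ l : Fin n, l ∉ C → l ≠ i → l ∉ F j ∧ j ∉ F l)
    (hj : j ∈ C \ π.part i) :
    (#(C ∩ π.part i) : ℚ) - #(π.part i \ C) / n
      ≤ faValue n (F j) ((C ∪ π.part i) \ π.part j)
        - faValue n (F j) (π.part j \ (C ∪ π.part i)) := by
  set P := π.part i
  set S := C ∪ P
  obtain ⟨hjC, hjP⟩ := mem_sdiff.1 hj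
  have hdisj : Disjoint (π.part j) P :=
    π.disjoint_part_of_notMem_part (mem_univ j) (mem_univ i) hjP
  have hfriends : faValue n (F j) ((S \ π.part j) ∩ C) = #((S \ π.part j) ∩ C) :=
    faValue_of_subset_clique hclique hjC inter_subset_right
      fun h => (mem_sdiff.1 (mem_inter.1 h).1).2 (π.mem_part (mem_univ j))
  have henemies : faValue n (F j) (π.part j \ S) = -(#(π.part j \ S) / n) :=
    faValue_of_disjoint_clique hisolated hjC (sdiff_disjoint.mono_right subset_union_left)
      fun h => (mem_sdiff.1 h).2 (mem_union_right _ (π.mem_part (mem_univ i)))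
  have hcardA : (#(C ∩ P) : ℚ) ≤ #((S \ π.part j) ∩ C) := by
    refine Nat.cast_le.2 (card_le_card fun k hk => ?_)
    obtain ⟨hkC, hkP⟩ := mem_inter.1 hk
    exact mem_inter.2 ⟨mem_sdiff.2 ⟨mem_union_left _ hkC,
      fun h => disjoint_left.1 hdisj h hkP⟩, hkC⟩
  have hcardPC : (#((S \ π.part j) \ C) : ℚ) / n ≤ #(P \ C) / n := by
    refine div_le_div_of_nonneg_right (Nat.cast_le.2 (card_le_card fun k hk => ?_)) (by positivity)
    obtain ⟨hkS, hkC⟩ := mem_sdiff.1 hk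
    exact mem_sdiff.2 ⟨(mem_union.1 (mem_sdiff.1 hkS).1).resolve_left hkC, hkC⟩
  have hrest := neg_card_div_le_faValue (n := n) (t := F j) ((S \ π.part j) \ C)
  have hnonneg : 0 ≤ (#(π.part j \ S) : ℚ) / n := by positivity
  rw [← faValue_inter_add_faValue_sdiff (S \ π.part j) C, hfriends, henemies]
  linarith

lemma clique_subset_part_of_inter_nonempty (hF : ∀ j, j ∉ F j)
    (hclique : ∀ j ∈ C, ∀ k ∈ C, j ≠ k → k ∈ F j)
    (hisolated : ∀ j ∈ C, ∀ l : Fin n, l ∉ C → l ≠ i → l ∉ F j ∧ j ∉ F l)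
    (hopt : ∀ σ : Finpartition (univ : Finset (Fin n)), faSW n F σ ≤ faSW n F π)
    (hCi : (C ∩ π.part i).Nonempty) : C ⊆ π.part i := by
  by_contra hsub
  set P := π.part i
  set S := C ∪ P
  obtain ⟨b, hb⟩ : (C \ P).Nonempty := sdiff_nonempty.2 hsub
  have hPC : (#(P \ C) : ℚ) / n < #(C ∩ P) := by
    have : #(P \ C) < n := by
      simpa using card_lt_univ_of_notMem fun h => (mem_sdiff.1 hb).2 (mem_sdiff.1 h).1
    calc (#(P \ C) : ℚ) / n < 1 := (div_lt_one (Nat.cast_pos.2 b.pos)).2 (by exact_mod_cast this)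
      _ ≤ #(C ∩ P) := by exact_mod_cast hCi.card_pos
  have hloss : ∀ j ∈ Sᶜ, faValue n (F j) (π.part j ∩ S) ≤ 0 := fun j hj => by
    obtain ⟨hjC, hjP⟩ : j ∉ C ∧ j ∉ P := by simpa [S] using hj
    have hdisj := π.disjoint_part_of_notMem_part (mem_univ j) (mem_univ i) hjP
    refine faValue_nonpos_of_notMem_clique hisolated hjC
      (by rintro rfl; exact hjP (π.mem_part (mem_univ _))) fun k hk => ?_
    obtain ⟨hkj, hkS⟩ := mem_inter.1 hk
    exact (mem_union.1 hkS).resolve_right (disjoint_left.1 hdisj hkj)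
  have hgainP : ∀ j ∈ P, faValue n (F j) (S \ π.part j) - faValue n (F j) (π.part j \ S)
      = faValue n (F j) (C \ P) := fun j hj => by
    rw [π.part_eq_of_mem (π.part_mem.2 (mem_univ i)) hj, union_sdiff_right,
      sdiff_eq_empty_iff_subset.2 subset_union_right]
    simp [faValue]
  have hsumB := card_nsmul_le_sum (C \ P) _ _ fun j hj =>
    le_isolate_gain_of_mem_clique_sdiff_part hclique hisolated hj
  rw [nsmul_eq_mul] at hsumB
  have hle := sum_isolate_gain_le hF hopt (S := S) ⟨b, mem_union_left _ (mem_sdiff.1 hb).1⟩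
  rw [← sum_inter_add_sum_sdiff S P, inter_eq_right.2 subset_union_right, union_sdiff_right,
    sum_congr rfl hgainP] at hle
  have hpos := mul_pos (Nat.cast_pos.2 (card_pos.2 ⟨b, hb⟩)) (sub_pos.2 hPC)
  linarith [sum_nonpos hloss, card_sdiff_mul_le_sum_faValue (n := n) hclique P]

end OptimalPartition

theorem stmt1_general (n : ℕ) (F : Fin n → Finset (Fin n)) (hF : ∀ j, j ∉ F j)
    (C : Finset (Fin n)) (i : Fin n)
    (hclique : ∀ j ∈ C, ∀ k ∈ C, j ≠ k → k ∈ F j)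
    (hisolated : ∀ j ∈ C, ∀ l : Fin n, l ∉ C → l ≠ i → l ∉ F j ∧ j ∉ F l)
    (π : Finpartition (univ : Finset (Fin n)))
    (hopt : ∀ σ : Finpartition (univ : Finset (Fin n)), faSW n F σ ≤ faSW n F π) :
    ∃ C' ∈ π.parts, C ⊆ C' ∧ (i ∉ C' → C' = C) := by
  by_cases hsub : C ⊆ π.part i
  · exact ⟨π.part i, π.part_mem.2 (mem_univ i), hsub,
      fun hi => absurd (π.mem_part (mem_univ i)) hi⟩
  have hdisj : Disjoint C (π.part i) := by
    rw [disjoint_iff_inter_eq_empty, ← not_nonempty_iff_eq_empty]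
    exact fun h => hsub (clique_subset_part_of_inter_nonempty hF hclique hisolated hopt h)
  obtain ⟨j, hj, -⟩ := not_subset.1 hsub
  exact ⟨C, clique_mem_parts_of_disjoint_part hF hclique hisolated hopt ⟨j, hj⟩ hdisj,
    subset_rfl, fun _ => rfl⟩

/-- If `C` is an almost isolated clique with hinge node `i`, then any optimal partition `π`
has a coalition `C'` with `C ⊆ C'`, and moreover `i ∉ C'` implies `C' = C`. -/
theorem stmt1 (n : ℕ) (hn : 0 < n) (F : Fin n → Finset (Fin n)) (hF : ∀ j, j ∉ F j)
    (C : Finset (Fin n)) (i : Fin n) (hiC : i ∉ C)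
    (hclique : ∀ j ∈ C, ∀ k ∈ C, j ≠ k → k ∈ F j)
    (hisolated : ∀ j ∈ C, ∀ l : Fin n, l ∉ C → l ≠ i → l ∉ F j ∧ j ∉ F l)
    (π : Finpartition (univ : Finset (Fin n)))
    (hopt : ∀ σ : Finpartition (univ : Finset (Fin n)), faSW n F σ ≤ faSW n F π) :
    ∃ C' ∈ π.parts, C ⊆ C' ∧ (i ∉ C' → C' = C) :=
  stmt1_general n F hF C i hclique hisolated π hopt
end

section
/- Let the friendship graph of an FA game be an i-centered octopus graph with head H. If |H| ≥ ⌈n/2⌉, then the partition consisting of the coalition H ∪ {i} together with every remaining agent as a singleton coalition is the unique optimal partition. -/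
/-!
Scaling by `n`, `n · SW(π) = (n + 1) A(π) - B(π)`, where `A(π)` counts the ordered pairs `(j, k)`
of coalition partners with `k ∈ F j` and `B(π)` all ordered pairs of coalition partners. In an
octopus every friendship lies inside `H ∪ {i}` or starts at `i`. If `i`'s coalition contains `a`
head members and `m` other agents, and `k = |H| - a`, then separating the `k` head members from
`i` loses at least `2ak + k` friend pairs while `i` gains at most `m` friends; as `|H| ≥ n / 2`
this outweighs the saving in `B` unless `k = m = 0`. Once `i`'s coalition is `H ∪ {i}`, every
other non-singleton coalition only increases `B`.
-/

open Finset

namespace Finpartition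

variable {α : Type*} [DecidableEq α]

lemma sum_card_inter {s X : Finset α} (π : Finpartition s) (hX : X ⊆ s) :
    ∑ C ∈ π.parts, #(C ∩ X) = #X := by
  rw [← (π.restrict hX).sum_card_parts, π.sum_restrict hX card card_empty]
  rfl

lemma sum_card_inter_mul_pred_le {s X C₀ : Finset α}
    (π : Finpartition s) (hX : X ⊆ s) (hC₀ : C₀ ∈ π.parts) :
    ∑ C ∈ π.parts, (#(C ∩ X) : ℤ) * (#(C ∩ X) - 1) ≤
      #(C₀ ∩ X) * (#(C₀ ∩ X) - 1 : ℤ) + (#X - #(C₀ ∩ X)) * (#X - #(C₀ ∩ X) - 1) := by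
  have hrest : ∑ C ∈ π.parts.erase C₀, (#(C ∩ X) : ℤ) = #X - #(C₀ ∩ X) := by
    rw [eq_sub_iff_add_eq', add_sum_erase _ (fun C => (#(C ∩ X) : ℤ)) hC₀]
    exact_mod_cast π.sum_card_inter hX
  have hsq := sum_sq_le_sq_sum_of_nonneg (s := π.parts.erase C₀)
    (f := fun C => (#(C ∩ X) : ℤ)) fun _ _ => by positivity
  have hexpand : ∑ C ∈ π.parts.erase C₀, (#(C ∩ X) : ℤ) * (#(C ∩ X) - 1) =
      ∑ C ∈ π.parts.erase C₀, (#(C ∩ X) : ℤ) ^ 2 - ∑ C ∈ π.parts.erase C₀, (#(C ∩ X) : ℤ) := by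
    rw [← sum_sub_distrib]
    exact sum_congr rfl fun _ _ => by ring
  rw [← add_sum_erase _ _ hC₀, hexpand]
  rw [hrest] at hsq ⊢
  nlinarith

variable [Fintype α]

lemma sum_ite_mem {M : Type*} [AddCommMonoid M] (π : Finpartition (univ : Finset α)) (x : α)
    (g : Finset α → M) : ∑ C ∈ π.parts, (if x ∈ C then g C else 0) = g (π.part x) := by
  rw [sum_eq_single_of_mem _ (π.part_mem.2 (mem_univ x)), if_pos (π.mem_part_self.2 (mem_univ x))]
  exact fun C hC hne => if_neg fun hx => hne (π.part_eq_of_mem hC hx).symm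

lemma exists_parts_eq_insert_image_singleton {A : Finset α} (hA : A.Nonempty) :
    ∃ π : Finpartition (univ : Finset α), π.parts = insert A ((univ \ A).image singleton) :=
  ⟨(⊥ : Finpartition (univ \ A)).extend hA.ne_empty sdiff_disjoint (sdiff_union_of_subset
    (subset_univ A)), by simp [map_eq_image]⟩

lemma parts_eq_insert_image_singleton (π : Finpartition (univ : Finset α)) {A : Finset α}
    (hA : A ∈ π.parts) (h : ∀ C ∈ π.parts, C ≠ A → #C ≤ 1) :
    π.parts = insert A ((univ \ A).image singleton) := by
  ext C
  simp only [mem_insert, mem_image, mem_sdiff, mem_univ, true_and]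
  constructor
  · intro hC
    refine or_iff_not_imp_left.2 fun hCA => ?_
    obtain ⟨x, hx⟩ := π.nonempty_of_mem_parts hC
    exact ⟨x, disjoint_left.1 (π.disjoint hC hA hCA) hx,
      (eq_singleton_iff_unique_mem.2 ⟨hx, fun y hy => card_le_one.1 (h C hC hCA) y hy x hx⟩).symm⟩
  · rintro (rfl | ⟨x, hx, rfl⟩)
    · exact hA
    have hxpart := π.mem_part_self.2 (mem_univ x)
    have hpart := π.part_mem.2 (mem_univ x)
    have hne : π.part x ≠ A := fun h => hx (h ▸ hxpart)
    rwa [← eq_singleton_iff_unique_mem.2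
      ⟨hxpart, fun y hy => card_le_one.1 (h _ hpart hne) y hy x hxpart⟩]

end Finpartition

lemma Finset.sum_insert_image_singleton {α M : Type*} [DecidableEq α] [AddCommMonoid M]
    (S A : Finset α) (g : Finset α → M) :
    ∑ C ∈ insert A ((S \ A).image singleton), g C = g A + ∑ x ∈ S \ A, g {x} := by
  rw [sum_insert, sum_image fun _ _ _ _ h => singleton_injective h]
  simp only [mem_image, mem_sdiff, not_exists, not_and]
  rintro x ⟨-, hx⟩ rfl
  exact hx (mem_singleton_self x)

lemma Finset.card_inter_le_card_inter_add_card_sdiff {α : Type*} [DecidableEq α]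
    (s t u : Finset α) : #(s ∩ u) ≤ #(t ∩ u) + #(s \ t) :=
  (card_le_card fun x hx => by
    by_cases hxt : x ∈ t
    · exact mem_union_left _ (mem_inter.2 ⟨hxt, (mem_inter.1 hx).2⟩)
    · exact mem_union_right _ (mem_sdiff.2 ⟨(mem_inter.1 hx).1, hxt⟩)).trans
  (card_union_le _ _)

section Welfare

variable {α : Type*}

def coalitionPairs (P : Finset (Finset α)) : ℤ :=
  ∑ C ∈ P, (#C : ℤ) * (#C - 1)

lemma card_mul_pred_nonneg (C : Finset α) : 0 ≤ (#C : ℤ) * (#C - 1) := by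
  nlinarith [Int.le_self_sq (#C : ℤ)]

lemma card_mul_pred_le_coalitionPairs [DecidableEq α] {s C₀ : Finset α} (π : Finpartition s)
    (hC₀ : C₀ ∈ π.parts) : (#C₀ : ℤ) * (#C₀ - 1) ≤ coalitionPairs π.parts :=
  single_le_sum (f := fun C => (#C : ℤ) * (#C - 1)) (fun C _ => card_mul_pred_nonneg C) hC₀

lemma card_mul_pred_add_le_coalitionPairs [DecidableEq α] {s C₀ C : Finset α}
    (π : Finpartition s) (hC₀ : C₀ ∈ π.parts) (hC : C ∈ π.parts) (hne : C₀ ≠ C) :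
    (#C₀ : ℤ) * (#C₀ - 1) + #C * (#C - 1) ≤ coalitionPairs π.parts := by
  rw [← sum_pair (f := fun C => (#C : ℤ) * (#C - 1)) hne]
  exact sum_le_sum_of_subset_of_nonneg (insert_subset hC₀ (singleton_subset_iff.2 hC))
    fun C _ _ => card_mul_pred_nonneg C

def friendPairs [DecidableEq α] (F : α → Finset α) (P : Finset (Finset α)) : ℤ :=
  ∑ C ∈ P, ∑ j ∈ C, (#(C ∩ F j) : ℤ)

def scaledSW (n : ℕ) (F : Fin n → Finset (Fin n)) (π : Finpartition (univ : Finset (Fin n))) :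
    ℤ :=
  (n + 1) * friendPairs F π.parts - coalitionPairs π.parts

variable {n : ℕ}

lemma natCast_mul_faUtil (hn : 0 < n) {t C : Finset (Fin n)} {j : Fin n} (hj : j ∈ C)
    (hjt : j ∉ t) : (n : ℚ) * faUtil n t j C = (n + 1) * #(C ∩ t) - #C + 1 := by
  have hsplit := card_inter_add_card_sdiff C (t ∪ {j})
  rw [union_singleton, inter_insert_of_mem hj,
    card_insert_of_notMem fun h => hjt (mem_inter.1 h).2] at hsplit
  rw [faUtil, union_singleton, ← hsplit]
  field_simp
  push_cast
  ring

lemma natCast_mul_faSW (hn : 0 < n) {F : Fin n → Finset (Fin n)} (hF : ∀ j, j ∉ F j)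
    (π : Finpartition (univ : Finset (Fin n))) : (n : ℚ) * faSW n F π = scaledSW n F π := by
  simp only [faSW, scaledSW, friendPairs, coalitionPairs, mul_sum, Int.cast_sub, Int.cast_mul,
    Int.cast_sum, Int.cast_add, Int.cast_natCast, Int.cast_one, ← sum_sub_distrib]
  refine sum_congr rfl fun C _ => ?_
  rw [sum_congr rfl fun j hj => natCast_mul_faUtil hn hj (hF j), sum_add_distrib, sum_sub_distrib,
    ← mul_sum]
  simp only [sum_const, nsmul_eq_mul, mul_one]
  ring

lemma faSW_lt_faSW_iff (hn : 0 < n) {F : Fin n → Finset (Fin n)} (hF : ∀ j, j ∉ F j)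
    {σ π : Finpartition (univ : Finset (Fin n))} :
    faSW n F σ < faSW n F π ↔ scaledSW n F σ < scaledSW n F π := by
  rw [← mul_lt_mul_iff_right₀ (by exact_mod_cast hn : (0 : ℚ) < n), natCast_mul_faSW hn hF,
    natCast_mul_faSW hn hF, Int.cast_lt]

end Welfare

section Octopus

variable {α : Type*} [DecidableEq α] {F : α → Finset α} {i : α} {H : Finset α}

lemma friends_eq_of_mem_head (hF : ∀ j, j ∉ F j) (hiH : i ∉ H)
    (hclique : ∀ j ∈ H, ∀ k ∈ H, j ≠ k → k ∈ F j) (hhead : ∀ j ∈ H, i ∈ F j)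
    (houtside : ∀ j, j ≠ i → ∀ k, k ∉ H → k ≠ i → k ∉ F j ∧ j ∉ F k ∧ i ∉ F k)
    {j : α} (hj : j ∈ H) : F j = insert i (H.erase j) := by
  ext k
  simp only [mem_insert, mem_erase]
  constructor
  · intro hk
    by_contra! h
    exact (houtside j (ne_of_mem_of_not_mem hj hiH) k (h.2 fun hkj => hF j (hkj ▸ hk)) h.1).1 hk
  · rintro (rfl | ⟨hkj, hk⟩)
    exacts [hhead j hj, hclique j hj k hk (Ne.symm hkj)]

lemma friends_eq_empty_of_notMem
    (houtside : ∀ j, j ≠ i → ∀ k, k ∉ H → k ≠ i → k ∉ F j ∧ j ∉ F k ∧ i ∉ F k)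
    {k : α} (hk : k ∉ insert i H) : F k = ∅ := by
  rw [mem_insert, not_or] at hk
  refine eq_empty_of_forall_notMem fun j hj => ?_
  by_cases hji : j = i
  · exact (houtside k hk.1 k hk.2 hk.1).2.2 (hji ▸ hj)
  · exact (houtside j hji k hk.2 hk.1).2.1 hj

lemma sum_card_inter_friends (hiH : i ∉ H) (hFhead : ∀ j ∈ H, F j = insert i (H.erase j))
    (hFtail : ∀ k ∉ insert i H, F k = ∅) (C : Finset α) :
    ∑ j ∈ C, (#(C ∩ F j) : ℤ) = #(C ∩ H) * (#(C ∩ H) - 1) +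
      if i ∈ C then (#(C ∩ H) + #(C ∩ F i) : ℤ) else 0 := by
  have hhead_card : ∀ j ∈ C ∩ H, (#(C ∩ F j) : ℤ) = #(C ∩ H) - 1 + if i ∈ C then 1 else 0 := by
    intro j hj
    have hi : i ∉ (C ∩ H).erase j := fun h => hiH (mem_inter.1 (mem_of_mem_erase h)).2
    rw [hFhead j (mem_inter.1 hj).2]
    split_ifs with hiC
    · rw [inter_insert_of_mem hiC, inter_erase, card_insert_of_notMem hi, card_erase_of_mem hj]
      push_cast [card_pos.2 ⟨j, hj⟩]
      ring
    · rw [inter_insert_of_notMem hiC, inter_erase, card_erase_of_mem hj]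
      push_cast [card_pos.2 ⟨j, hj⟩]
      ring
  have htail_card : ∀ j ∈ C \ H, (#(C ∩ F j) : ℤ) = if j = i then (#(C ∩ F i) : ℤ) else 0 := by
    intro j hj
    split_ifs with hji
    · rw [hji]
    · rw [hFtail j (by simp [hji, (mem_sdiff.1 hj).2]), inter_empty, card_empty, Nat.cast_zero]
  rw [← sum_inter_add_sum_sdiff C H, sum_congr rfl hhead_card, sum_congr rfl htail_card,
    sum_ite_eq' (C \ H), sum_const, nsmul_eq_mul]
  by_cases hiC : i ∈ C
  · simp only [hiC, hiH, mem_sdiff, if_true, not_false_eq_true, and_self, sub_add_cancel]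
    ring
  · simp only [hiC, mem_sdiff, false_and, if_false, add_zero]

variable [Fintype α]

lemma friendPairs_eq (hiH : i ∉ H) (hFhead : ∀ j ∈ H, F j = insert i (H.erase j))
    (hFtail : ∀ k ∉ insert i H, F k = ∅) (π : Finpartition (univ : Finset α)) :
    friendPairs F π.parts = ∑ C ∈ π.parts, (#(C ∩ H) : ℤ) * (#(C ∩ H) - 1) +
      #(π.part i ∩ H) + #(π.part i ∩ F i) := by
  rw [friendPairs, sum_congr rfl fun C _ => sum_card_inter_friends hiH hFhead hFtail C,
    sum_add_distrib, π.sum_ite_mem i fun C => (#(C ∩ H) + #(C ∩ F i) : ℤ), add_assoc]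

def octopusParts (i : α) (H : Finset α) : Finset (Finset α) :=
  insert (insert i H) ((univ \ insert i H).image singleton)

lemma friendPairs_octopusParts (hiH : i ∉ H) (hFhead : ∀ j ∈ H, F j = insert i (H.erase j))
    (hFtail : ∀ k ∉ insert i H, F k = ∅) :
    friendPairs F (octopusParts i H) = #H * #H + #(insert i H ∩ F i) := by
  rw [friendPairs, octopusParts, sum_insert_image_singleton,
    sum_card_inter_friends hiH hFhead hFtail, if_pos (mem_insert_self i H),
    insert_inter_of_notMem hiH, inter_self,
    sum_eq_zero fun x hx => by
      rw [sum_singleton, hFtail x (mem_sdiff.1 hx).2, inter_empty, card_empty, Nat.cast_zero]]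
  ring

lemma coalitionPairs_octopusParts (hiH : i ∉ H) :
    coalitionPairs (octopusParts i H) = (#H + 1) * #H := by
  rw [coalitionPairs, octopusParts, sum_insert_image_singleton, card_insert_of_notMem hiH,
    sum_eq_zero fun x _ => by simp]
  push_cast
  ring

lemma friendPairs_le (hiH : i ∉ H) (hFhead : ∀ j ∈ H, F j = insert i (H.erase j))
    (hFtail : ∀ k ∉ insert i H, F k = ∅) (π : Finpartition (univ : Finset α)) :
    friendPairs F π.parts ≤ #(π.part i ∩ H) * (#(π.part i ∩ H) - 1 : ℤ) +
      (#H - #(π.part i ∩ H)) * (#H - #(π.part i ∩ H) - 1) + #(π.part i ∩ H) +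
      #(insert i H ∩ F i) + #(π.part i \ insert i H) := by
  have hpairs := π.sum_card_inter_mul_pred_le (subset_univ H) (π.part_mem.2 (mem_univ i))
  have hfriends : #(π.part i ∩ F i) ≤ #(insert i H ∩ F i) + #(π.part i \ insert i H) :=
    card_inter_le_card_inter_add_card_sdiff _ _ _
  rw [friendPairs_eq hiH hFhead hFtail]
  linarith

lemma card_part_eq (hiH : i ∉ H) (π : Finpartition (univ : Finset α)) :
    #(π.part i) = #(π.part i ∩ H) + #(π.part i \ insert i H) + 1 := by
  rw [← card_inter_add_card_sdiff (π.part i) (insert i H),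
    inter_insert_of_mem (π.mem_part_self.2 (mem_univ i)),
    card_insert_of_notMem fun h => hiH (mem_inter.1 h).2]
  ring

lemma card_part_sdiff_add_le (hiH : i ∉ H) (π : Finpartition (univ : Finset α)) :
    #(π.part i \ insert i H) + #H + 1 ≤ Fintype.card α := by
  have := card_le_univ (π.part i \ insert i H ∪ insert i H)
  rwa [card_union_of_disjoint sdiff_disjoint, card_insert_of_notMem hiH, ← add_assoc] at this

end Octopus

-- `a` and `k` count the head members inside and outside `i`'s coalition, `m` its other members.
lemma octopus_gap_pos {n a k m : ℤ} (ha : 0 ≤ a) (hk : 0 ≤ k) (hm : 0 ≤ m)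
    (hn : a + k + m + 1 ≤ n) (hn2 : n ≤ 2 * (a + k)) (hkm : 0 < k ∨ 0 < m) :
    (a + k + 1) * (a + k) < (n + 1) * (2 * a * k + k - m) + (a + m + 1) * (a + m) := by
  rcases hk.eq_or_lt with rfl | hk
  · have hm : 0 < m := by omega
    nlinarith
  rcases ha.eq_or_lt with rfl | ha
  · nlinarith
  · nlinarith [mul_pos ha hk, mul_nonneg (mul_nonneg ha.le hk.le) hm, mul_nonneg hm hk.le]

section OctopusWelfare

variable {n : ℕ} {F : Fin n → Finset (Fin n)} {i : Fin n} {H : Finset (Fin n)}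

lemma scaledSW_of_parts_eq_octopusParts (hiH : i ∉ H)
    (hFhead : ∀ j ∈ H, F j = insert i (H.erase j)) (hFtail : ∀ k ∉ insert i H, F k = ∅)
    {π : Finpartition (univ : Finset (Fin n))} (hπ : π.parts = octopusParts i H) :
    scaledSW n F π = (n + 1) * (#H * #H + #(insert i H ∩ F i)) - (#H + 1) * #H := by
  rw [scaledSW, hπ, friendPairs_octopusParts hiH hFhead hFtail, coalitionPairs_octopusParts hiH]

lemma scaledSW_lt_of_parts_ne_octopusParts (hiH : i ∉ H)
    (hFhead : ∀ j ∈ H, F j = insert i (H.erase j)) (hFtail : ∀ k ∉ insert i H, F k = ∅)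
    (hH : n ≤ 2 * #H) {π : Finpartition (univ : Finset (Fin n))} (hπ : π.parts ≠ octopusParts i H) :
    scaledSW n F π < (n + 1) * (#H * #H + #(insert i H ∩ F i)) - (#H + 1) * #H := by
  have hA := mul_le_mul_of_nonneg_left (friendPairs_le hiH hFhead hFtail π)
    (by positivity : (0 : ℤ) ≤ n + 1)
  have hcard := card_part_eq hiH π
  have hout := card_part_sdiff_add_le hiH π
  rw [Fintype.card_fin] at hout
  set C₀ := π.part i
  have hC₀ : C₀ ∈ π.parts := π.part_mem.2 (mem_univ i)
  have hiC₀ : i ∈ C₀ := π.mem_part_self.2 (mem_univ i)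
  have hhead_le : #(C₀ ∩ H) ≤ #H := card_le_card inter_subset_right
  rw [scaledSW]
  by_cases hC₀eq : C₀ = insert i H
  · obtain ⟨C, hC, hne, hC2⟩ : ∃ C ∈ π.parts, C₀ ≠ C ∧ 2 ≤ #C := by
      by_contra! h
      refine hπ ?_
      rw [octopusParts, ← hC₀eq]
      exact π.parts_eq_insert_image_singleton hC₀ fun C hC hne =>
        Nat.lt_succ_iff.1 (h C hC hne.symm)
    have hB := card_mul_pred_add_le_coalitionPairs π hC₀ hC hne
    rw [hcard] at hB
    simp only [hC₀eq, insert_inter_of_notMem hiH, inter_self, sdiff_self, bot_eq_empty,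
      card_empty] at hA hB
    push_cast at hA hB
    nlinarith [(Nat.cast_le (α := ℤ)).2 hC2]
  · have hkm : #(C₀ ∩ H) < #H ∨ 0 < #(C₀ \ insert i H) := by
      by_contra! h
      have hHC₀ : H ⊆ C₀ :=
        eq_of_subset_of_card_le inter_subset_right h.1 ▸ inter_subset_left
      exact hC₀eq (subset_antisymm
        (sdiff_eq_empty_iff_subset.1 (card_eq_zero.1 (Nat.le_zero.1 h.2)))
        (insert_subset hiC₀ hHC₀))
    have hgap := octopus_gap_pos (n := n) (a := #(C₀ ∩ H)) (k := #H - #(C₀ ∩ H))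
      (m := #(C₀ \ insert i H)) (Nat.cast_nonneg _) (by omega) (Nat.cast_nonneg _)
      (by omega) (by omega) (by omega)
    have hB := card_mul_pred_le_coalitionPairs π hC₀
    rw [hcard] at hB
    push_cast at hA hB
    nlinarith

end OctopusWelfare

theorem stmt2_general (n : ℕ) (F : Fin n → Finset (Fin n)) (hF : ∀ j, j ∉ F j)
    (i : Fin n) (H : Finset (Fin n)) (hiH : i ∉ H)
    (hclique : ∀ j ∈ H, ∀ k ∈ H, j ≠ k → k ∈ F j)
    (hhead : ∀ j ∈ H, i ∈ F j)
    (houtside : ∀ j : Fin n, j ≠ i → ∀ k : Fin n, k ∉ H → k ≠ i →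
      k ∉ F j ∧ j ∉ F k ∧ i ∉ F k)
    (hH : (n + 1) / 2 ≤ H.card) :
    ∀ π : Finpartition (univ : Finset (Fin n)),
      (∀ σ : Finpartition (univ : Finset (Fin n)), faSW n F σ ≤ faSW n F π) ↔
        π.parts = insert (insert i H)
          (((univ : Finset (Fin n)) \ insert i H).image fun j => ({j} : Finset (Fin n))) := by
  have hFhead : ∀ j ∈ H, F j = insert i (H.erase j) := fun j hj =>
    friends_eq_of_mem_head hF hiH hclique hhead houtside hj
  have hFtail : ∀ k ∉ insert i H, F k = ∅ := fun k hk => friends_eq_empty_of_notMem houtside hk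
  obtain ⟨πT, hπT⟩ := Finpartition.exists_parts_eq_insert_image_singleton (insert_nonempty i H)
  have hlt : ∀ σ, σ ≠ πT → faSW n F σ < faSW n F πT := fun σ hσ => by
    rw [faSW_lt_faSW_iff i.pos hF, scaledSW_of_parts_eq_octopusParts hiH hFhead hFtail hπT]
    exact scaledSW_lt_of_parts_ne_octopusParts hiH hFhead hFtail (by omega)
      fun h => hσ (Finpartition.ext (h.trans hπT.symm))
  intro π
  constructor
  · intro hπ
    by_contra hne
    exact (hπ πT).not_gt (hlt π fun h => hne (h ▸ hπT))
  · intro hπ σ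
    obtain rfl : π = πT := Finpartition.ext (hπ.trans hπT.symm)
    rcases eq_or_ne σ π with rfl | hσ
    exacts [le_rfl, (hlt σ hσ).le]

/-- If the friendship graph is an `i`-centered octopus graph with head `H` and
`|H| ≥ ⌈n/2⌉`, then a partition is optimal iff its coalitions are exactly `H ∪ {i}`
together with every remaining agent as a singleton (unique optimal partition). -/
theorem stmt2 (n : ℕ) (hn : 0 < n) (F : Fin n → Finset (Fin n)) (hF : ∀ j, j ∉ F j)
    (i : Fin n) (H : Finset (Fin n)) (hiH : i ∉ H)
    (hclique : ∀ j ∈ H, ∀ k ∈ H, j ≠ k → k ∈ F j)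
    (hhead : ∀ j ∈ H, i ∈ F j)
    (houtside : ∀ j : Fin n, j ≠ i → ∀ k : Fin n, k ∉ H → k ≠ i →
      k ∉ F j ∧ j ∉ F k ∧ i ∉ F k)
    (hH : (n + 1) / 2 ≤ H.card) :
    ∀ π : Finpartition (univ : Finset (Fin n)),
      (∀ σ : Finpartition (univ : Finset (Fin n)), faSW n F σ ≤ faSW n F π) ↔
        π.parts = insert (insert i H)
          (((univ : Finset (Fin n)) \ insert i H).image fun j => ({j} : Finset (Fin n))) :=
  stmt2_general n F hF i H hiH hclique hhead houtside hH
end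

section
/- Let the friendship graph of an FA game be an i-centered generalized octopus graph with head H and tentacles T_1,…,T_m. If the partition π* = {H ∪ {i}, T_1, …, T_m} is optimal, then |H| ≥ max_{l ∈ [m]} (|F_i ∩ T_l| / |T_l|) · (n+1)/2 − 1. -/
open Finset

/-- If the friendship graph is an `i`-centered generalized octopus graph with head `H` and
tentacles `T 1, …, T m`, and the partition `{H ∪ {i}, T 1, …, T m}` is optimal, then
`|H| ≥ (|F_i ∩ T_l| / |T_l|)·(n+1)/2 − 1` for every tentacle `T l` (hence for the max). -/
theorem stmt3 (n m : ℕ) (hn : 0 < n) (F : Fin n → Finset (Fin n)) (hF : ∀ j, j ∉ F j)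
    (i : Fin n) (H : Finset (Fin n)) (T : Fin m → Finset (Fin n))
    (hHne : H.Nonempty) (hTne : ∀ l, (T l).Nonempty)
    (hiH : i ∉ H) (hiT : ∀ l, i ∉ T l)
    (hdisjHT : ∀ l, Disjoint H (T l))
    (hdisjT : ∀ l l', l ≠ l' → Disjoint (T l) (T l'))
    (hcover : insert i (H ∪ univ.biUnion T) = (univ : Finset (Fin n)))
    (hHclique : ∀ j ∈ H, ∀ k ∈ H, j ≠ k → k ∈ F j)
    (hTclique : ∀ l, ∀ j ∈ T l, ∀ k ∈ T l, j ≠ k → k ∈ F j)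
    (hhead : ∀ j ∈ H, i ∈ F j)
    (htent : ∀ l, ∀ j : Fin n, j ∉ T l → j ≠ i → ∀ k ∈ T l,
      k ∉ F j ∧ j ∉ F k ∧ i ∉ F k)
    (π : Finpartition (univ : Finset (Fin n)))
    (hparts : π.parts = insert (insert i H) (Finset.image T univ))
    (hopt : ∀ σ : Finpartition (univ : Finset (Fin n)), faSW n F σ ≤ faSW n F π) :
    ∀ l : Fin m,
      ((F i ∩ T l).card : ℚ) / ((T l).card : ℚ) * (((n : ℚ) + 1) / 2) - 1 ≤ (H.card : ℚ) := by
  classical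
  intro l
  set A : Finset (Fin n) := insert i H with hAdef
  set B : Finset (Fin n) := T l with hBdef
  set C : Finset (Fin n) := A ∪ B with hCdef
  have hn' : (0 : ℚ) < (n : ℚ) := by exact_mod_cast hn
  have hiB : i ∉ B := hiT l
  have hdisjHB : Disjoint H B := hdisjHT l
  have hdisjAB : Disjoint A B := by
    rw [hAdef, Finset.disjoint_insert_left]; exact ⟨hiB, hdisjHB⟩
  have hTinj : ∀ x y : Fin m, T x = T y → x = y := by
    intro x y hxy
    by_contra hne
    have hd := hdisjT x y hne
    rw [hxy, disjoint_self] at hd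
    exact (hTne y).ne_empty hd
  have hiFk : ∀ k ∈ B, i ∉ F k := by
    obtain ⟨j0, hj0⟩ := hHne
    intro k hk
    exact (htent l j0 (Finset.disjoint_left.mp hdisjHB hj0)
      (fun h => hiH (h ▸ hj0)) k hk).2.2
  have hHB : ∀ j ∈ H, ∀ k ∈ B, k ∉ F j ∧ j ∉ F k := by
    intro j hj k hk
    have h' := htent l j (Finset.disjoint_left.mp hdisjHB hj)
      (fun h => hiH (h ▸ hj)) k hk
    exact ⟨h'.1, h'.2.1⟩
  -- set identities for the head coalition A
  have hAi : A ∩ F i = H ∩ F i := by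
    ext x
    simp only [hAdef, mem_inter, mem_insert]
    constructor
    · rintro ⟨hx | hx, hx2⟩
      · exact absurd (hx ▸ hx2) (hF i)
      · exact ⟨hx, hx2⟩
    · rintro ⟨hx, hx2⟩; exact ⟨Or.inr hx, hx2⟩
  have hAi' : A \ (F i ∪ {i}) = H \ F i := by
    ext x
    simp only [hAdef, mem_sdiff, mem_insert, mem_union, mem_singleton, not_or]
    constructor
    · rintro ⟨hx | hx, hx2, hx3⟩
      · exact absurd hx hx3
      · exact ⟨hx, hx2⟩
    · rintro ⟨hx, hx2⟩
      exact ⟨Or.inr hx, hx2, fun h => hiH (h ▸ hx)⟩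
  have hAj : ∀ j ∈ H, A ∩ F j = A.erase j := by
    intro j hj
    ext x
    simp only [mem_inter, mem_erase]
    constructor
    · rintro ⟨hx, hx2⟩
      exact ⟨fun h => hF j (h ▸ hx2), hx⟩
    · rintro ⟨hne, hx⟩
      refine ⟨hx, ?_⟩
      rcases Finset.mem_insert.mp hx with h | h
      · exact h ▸ hhead j hj
      · exact hHclique j hj x h (Ne.symm hne)
  have hAj' : ∀ j ∈ H, A \ (F j ∪ {j}) = ∅ := by
    intro j hj
    rw [Finset.eq_empty_iff_forall_notMem]
    intro x hx
    simp only [mem_sdiff, mem_union, mem_singleton, not_or] at hx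
    obtain ⟨hx, hx2, hx3⟩ := hx
    rcases Finset.mem_insert.mp hx with h | h
    · exact hx2 (h ▸ hhead j hj)
    · exact hx2 (hHclique j hj x h (Ne.symm hx3))
  -- set identities for the tentacle B
  have hBk : ∀ k ∈ B, B ∩ F k = B.erase k := by
    intro k hk
    ext x
    simp only [mem_inter, mem_erase]
    constructor
    · rintro ⟨hx, hx2⟩
      exact ⟨fun h => hF k (h ▸ hx2), hx⟩
    · rintro ⟨hne, hx⟩
      exact ⟨hx, hTclique l k hk x hx (Ne.symm hne)⟩
  have hBk' : ∀ k ∈ B, B \ (F k ∪ {k}) = ∅ := by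
    intro k hk
    rw [Finset.eq_empty_iff_forall_notMem]
    intro x hx
    simp only [mem_sdiff, mem_union, mem_singleton, not_or] at hx
    obtain ⟨hx, hx2, hx3⟩ := hx
    exact hx2 (hTclique l k hk x hx (Ne.symm hx3))
  -- set identities for the merged coalition C
  have hCi : C ∩ F i = (H ∩ F i) ∪ (B ∩ F i) := by
    rw [hCdef, Finset.union_inter_distrib_right, hAi]
  have hCi' : C \ (F i ∪ {i}) = (H \ F i) ∪ (B \ F i) := by
    rw [hCdef, Finset.union_sdiff_distrib, hAi']
    congr 1
    ext x
    simp only [mem_sdiff, mem_union, mem_singleton, not_or]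
    constructor
    · rintro ⟨hx, hx2, hx3⟩; exact ⟨hx, hx2⟩
    · rintro ⟨hx, hx2⟩; exact ⟨hx, hx2, fun h => hiB (h ▸ hx)⟩
  have hCj : ∀ j ∈ H, C ∩ F j = A.erase j := by
    intro j hj
    rw [hCdef, Finset.union_inter_distrib_right, hAj j hj]
    have : B ∩ F j = ∅ := by
      rw [Finset.eq_empty_iff_forall_notMem]
      rintro x hx
      rw [mem_inter] at hx
      exact (hHB j hj x hx.1).1 hx.2
    rw [this, Finset.union_empty]
  have hCj' : ∀ j ∈ H, C \ (F j ∪ {j}) = B := by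
    intro j hj
    rw [hCdef, Finset.union_sdiff_distrib, hAj' j hj, Finset.empty_union]
    ext x
    simp only [mem_sdiff, mem_union, mem_singleton, not_or]
    constructor
    · rintro ⟨hx, _, _⟩; exact hx
    · intro hx
      exact ⟨hx, (hHB j hj x hx).1, fun h => Finset.disjoint_left.mp hdisjHB hj (h ▸ hx)⟩
  have hCk : ∀ k ∈ B, C ∩ F k = B.erase k := by
    intro k hk
    rw [hCdef, Finset.union_inter_distrib_right, hBk k hk]
    have : A ∩ F k = ∅ := by
      rw [Finset.eq_empty_iff_forall_notMem]
      rintro x hx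
      rw [mem_inter] at hx
      rcases Finset.mem_insert.mp hx.1 with h | h
      · exact hiFk k hk (h ▸ hx.2)
      · exact (hHB x h k hk).2 hx.2
    rw [this, Finset.empty_union]
  have hCk' : ∀ k ∈ B, C \ (F k ∪ {k}) = A := by
    intro k hk
    rw [hCdef, Finset.union_sdiff_distrib, hBk' k hk, Finset.union_empty]
    ext x
    simp only [mem_sdiff, mem_union, mem_singleton, not_or]
    constructor
    · rintro ⟨hx, _, _⟩; exact hx
    · intro hx
      refine ⟨hx, ?_, ?_⟩
      · rcases Finset.mem_insert.mp hx with h | h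
        · exact h ▸ hiFk k hk
        · exact (hHB x h k hk).2
      · rcases Finset.mem_insert.mp hx with h | h
        · exact fun h2 => hiB ((h2 ▸ h) ▸ hk)
        · exact fun h2 => Finset.disjoint_left.mp hdisjHB h (h2 ▸ hk)
  -- cardinalities
  have hcardA : A.card = H.card + 1 := by
    rw [hAdef, Finset.card_insert_of_notMem hiH]
  have hcardAe : ∀ j ∈ H, ((A.erase j).card : ℚ) = (H.card : ℚ) := by
    intro j hj
    rw [Finset.card_erase_of_mem (Finset.mem_insert_of_mem hj), hcardA]
    simp
  have hcardBe : ∀ k ∈ B, ((B.erase k).card : ℚ) = (B.card : ℚ) - 1 := by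
    intro k hk
    rw [Finset.card_erase_of_mem hk]
    exact Nat.cast_pred (Finset.card_pos.mpr ⟨k, hk⟩)
  -- the three coalition welfare values
  have hfA : ∑ j ∈ A, faUtil n (F j) j A
      = ((H ∩ F i).card : ℚ) - ((H \ F i).card : ℚ) / n
        + (H.card : ℚ) * (H.card : ℚ) := by
    rw [hAdef, Finset.sum_insert hiH, ← hAdef]
    have h1 : faUtil n (F i) i A
        = ((H ∩ F i).card : ℚ) - ((H \ F i).card : ℚ) / n := by
      rw [faUtil, hAi, hAi']
    have h2 : ∀ j ∈ H, faUtil n (F j) j A = (H.card : ℚ) := by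
      intro j hj
      rw [faUtil, hAj j hj, hAj' j hj, hcardAe j hj]
      simp
    rw [h1, Finset.sum_congr rfl h2, Finset.sum_const, nsmul_eq_mul]
  have hfB : ∑ k ∈ B, faUtil n (F k) k B = (B.card : ℚ) * ((B.card : ℚ) - 1) := by
    have h2 : ∀ k ∈ B, faUtil n (F k) k B = (B.card : ℚ) - 1 := by
      intro k hk
      rw [faUtil, hBk k hk, hBk' k hk, hcardBe k hk]
      simp
    rw [Finset.sum_congr rfl h2, Finset.sum_const, nsmul_eq_mul]
  have hfC : ∑ j ∈ C, faUtil n (F j) j C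
      = (((H ∩ F i).card : ℚ) + ((B ∩ F i).card : ℚ)
          - (((H \ F i).card : ℚ) + ((B \ F i).card : ℚ)) / n)
        + (H.card : ℚ) * ((H.card : ℚ) - (B.card : ℚ) / n)
        + (B.card : ℚ) * (((B.card : ℚ) - 1) - ((H.card : ℚ) + 1) / n) := by
    rw [hCdef, Finset.sum_union hdisjAB, ← hCdef, hAdef, Finset.sum_insert hiH]
    have h1 : faUtil n (F i) i C
        = ((H ∩ F i).card : ℚ) + ((B ∩ F i).card : ℚ)
          - (((H \ F i).card : ℚ) + ((B \ F i).card : ℚ)) / n := by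
      rw [faUtil, hCi, hCi',
        Finset.card_union_of_disjoint
          (Finset.disjoint_of_subset_left (Finset.inter_subset_left)
            (Finset.disjoint_of_subset_right (Finset.inter_subset_left) hdisjHB)),
        Finset.card_union_of_disjoint
          (Finset.disjoint_of_subset_left (Finset.sdiff_subset)
            (Finset.disjoint_of_subset_right (Finset.sdiff_subset) hdisjHB))]
      push_cast
      ring
    have h2 : ∀ j ∈ H, faUtil n (F j) j C = (H.card : ℚ) - (B.card : ℚ) / n := by
      intro j hj
      rw [faUtil, hCj j hj, hCj' j hj, hcardAe j hj]
    have h3 : ∀ k ∈ B, faUtil n (F k) k C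
        = ((B.card : ℚ) - 1) - ((H.card : ℚ) + 1) / n := by
      intro k hk
      rw [faUtil, hCk k hk, hCk' k hk, hcardBe k hk, hcardA]
      push_cast
      ring
    rw [h1, Finset.sum_congr rfl h2, Finset.sum_congr rfl h3,
      Finset.sum_const, Finset.sum_const, nsmul_eq_mul, nsmul_eq_mul]
  -- the alternative partition σ
  have hCne : C.Nonempty := ⟨i, Finset.mem_union_left _ (Finset.mem_insert_self i H)⟩
  have hsupIndep : (insert C ((univ.erase l).image T)).SupIndep id := by
    rw [Finset.supIndep_iff_pairwiseDisjoint]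
    intro x hx y hy hxy
    simp only [coe_insert, Set.mem_insert_iff, coe_image, Set.mem_image, mem_coe,
      mem_erase, mem_univ] at hx hy
    have hdCT : ∀ l' : Fin m, l' ≠ l → Disjoint C (T l') := by
      intro l' hl'
      rw [hCdef, Finset.disjoint_union_left, hAdef, Finset.disjoint_insert_left]
      exact ⟨⟨hiT l', hdisjHT l'⟩, hdisjT l l' (Ne.symm hl')⟩
    rcases hx with rfl | ⟨lx, ⟨hlx, _⟩, rfl⟩
    · rcases hy with rfl | ⟨ly, ⟨hly, _⟩, rfl⟩
      · exact absurd rfl hxy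
      · exact hdCT ly hly
    · rcases hy with rfl | ⟨ly, ⟨hly, _⟩, rfl⟩
      · exact (hdCT lx hlx).symm
      · exact hdisjT lx ly (fun h => hxy (h ▸ rfl))
  have hsup : (insert C ((univ.erase l).image T)).sup id = (univ : Finset (Fin n)) := by
    apply Finset.eq_univ_iff_forall.mpr
    intro x
    have hx : x ∈ insert i (H ∪ univ.biUnion T) := hcover ▸ Finset.mem_univ x
    rw [Finset.mem_sup]
    rcases Finset.mem_insert.mp hx with rfl | hx
    · exact ⟨C, Finset.mem_insert_self _ _, Finset.mem_union_left _ (Finset.mem_insert_self x H)⟩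
    rcases Finset.mem_union.mp hx with hx | hx
    · exact ⟨C, Finset.mem_insert_self _ _,
        Finset.mem_union_left _ (Finset.mem_insert_of_mem hx)⟩
    · obtain ⟨l', _, hl'⟩ := Finset.mem_biUnion.mp hx
      by_cases h : l' = l
      · exact ⟨C, Finset.mem_insert_self _ _,
          Finset.mem_union_right _ (show x ∈ T l from h ▸ hl')⟩
      · exact ⟨T l', Finset.mem_insert_of_mem
          (Finset.mem_image.mpr ⟨l', Finset.mem_erase.mpr ⟨h, Finset.mem_univ l'⟩, rfl⟩), hl'⟩
  have hnotbot : ⊥ ∉ insert C ((univ.erase l).image T) := by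
    intro hb
    rw [bot_eq_empty] at hb
    rcases Finset.mem_insert.mp hb with h | h
    · exact hCne.ne_empty h.symm
    · obtain ⟨l', _, hl'⟩ := Finset.mem_image.mp h
      exact (hTne l').ne_empty hl'
  let σ : Finpartition (univ : Finset (Fin n)) :=
    ⟨insert C ((univ.erase l).image T), hsupIndep, hsup, hnotbot⟩
  -- social welfare of π and σ
  have hAnotimg : A ∉ Finset.image T univ := by
    intro hmem
    obtain ⟨l', _, hl'⟩ := Finset.mem_image.mp hmem
    exact hiT l' (hl' ▸ Finset.mem_insert_self i H)
  have hCnotimg : C ∉ (univ.erase l).image T := by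
    intro hmem
    obtain ⟨l', _, hl'⟩ := Finset.mem_image.mp hmem
    exact hiT l' (hl' ▸ Finset.mem_union_left _ (Finset.mem_insert_self i H))
  have hπSW : faSW n F π
      = (∑ j ∈ A, faUtil n (F j) j A) + ∑ l' : Fin m, ∑ k ∈ T l', faUtil n (F k) k (T l') := by
    rw [faSW, hparts]
    rw [Finset.sum_insert hAnotimg, Finset.sum_image (fun x _ y _ h => hTinj x y h)]
  have hσSW : faSW n F σ
      = (∑ j ∈ C, faUtil n (F j) j C)
        + ∑ l' ∈ univ.erase l, ∑ k ∈ T l', faUtil n (F k) k (T l') := by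
    show (∑ D ∈ insert C ((univ.erase l).image T), ∑ j ∈ D, faUtil n (F j) j D) = _
    rw [Finset.sum_insert hCnotimg, Finset.sum_image (fun x _ y _ h => hTinj x y h)]
  have hsplit : ∑ l' : Fin m, ∑ k ∈ T l', faUtil n (F k) k (T l')
      = (∑ k ∈ B, faUtil n (F k) k B)
        + ∑ l' ∈ univ.erase l, ∑ k ∈ T l', faUtil n (F k) k (T l') :=
    (Finset.add_sum_erase univ _ (Finset.mem_univ l)).symm
  -- optimality
  have hineq : ∑ j ∈ C, faUtil n (F j) j C
      ≤ (∑ j ∈ A, faUtil n (F j) j A) + ∑ k ∈ B, faUtil n (F k) k B := by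
    have := hopt σ
    rw [hπSW, hσSW, hsplit] at this
    linarith
  rw [hfA, hfB, hfC] at hineq
  -- final algebra
  have hc1 : ((T l ∩ F i).card : ℚ) + (((T l) \ F i).card : ℚ) = ((T l).card : ℚ) := by
    exact_mod_cast congrArg (Nat.cast : ℕ → ℚ) (Finset.card_inter_add_card_sdiff (T l) (F i))
  have ht0 : (0 : ℚ) < ((T l).card : ℚ) := by
    exact_mod_cast Finset.card_pos.mpr (hTne l)
  have hBcomm : ((B ∩ F i).card : ℚ) = ((F i ∩ T l).card : ℚ) := by
    rw [hBdef, Finset.inter_comm]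
  have hkey : ((F i ∩ T l).card : ℚ) * ((n : ℚ) + 1)
      ≤ 2 * ((T l).card : ℚ) * ((H.card : ℚ) + 1) := by
    have hBT : (B.card : ℚ) = ((T l).card : ℚ) := by rw [hBdef]
    have hBs : (((B) \ F i).card : ℚ) = (((T l) \ F i).card : ℚ) := by rw [hBdef]
    rw [hBcomm, hBT, hBs] at hineq
    have h2 := mul_le_mul_of_nonneg_right hineq (le_of_lt hn')
    have hne : (n : ℚ) ≠ 0 := ne_of_gt hn'
    field_simp at h2
    nlinarith [h2, hc1]
  have h2 : ((F i ∩ T l).card : ℚ) / ((T l).card : ℚ) * (((n : ℚ) + 1) / 2)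
      ≤ (H.card : ℚ) + 1 := by
    rw [div_mul_div_comm, div_le_iff₀ (by positivity)]
    exact hkey.trans_eq (by ring)
  linarith
end

section
/- Fix an agent i and let π* be an optimal partition of the FA game with friend sets (F_j)_{j∈N}. Define a new FA game on N by keeping F'_i = F_i and setting F'_j = π*(j) \ {j} for every agent j ≠ i (so each coalition of π* becomes a bidirectional clique, every member of π*(i) other than i declares i a friend, and all friendships across coalitions among agents other than i are removed; the resulting friendship graph is an i-centered generalized octopus graph with head π*(i) \ {i} and tentacles the remaining coalitions of π*). Then π* is also an optimal partition of the new game. -/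
open Finset

/-!
Fix a partition `σ` and compare it with the partition `τ` that keeps `σ(i)` and splits every
other coalition of `σ` along `π`; optimality of `π` gives `SW(τ) ≤ SW(π)`. Agent `i` has the same
friends in both games and the same coalition in `σ` and `τ`. An agent `j ≠ i`, whose new friends
are exactly `π(j) \ {j}`, loses exactly `|π(j) \ σ(j)| + |σ(j) \ π(j)| / n` in the new game by
moving from `π(j)` to `σ(j)`, while in the old game moving from `π(j)` to `τ(j)` gains her at most
`|π(j) \ τ(j)| + |τ(j) \ π(j)| / n`, which is no more because `σ(j) ∩ π(j) ⊆ τ(j) ⊆ σ(j)`.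
Summing over agents, `SW'(π) - SW'(σ) ≥ SW(π) - SW(τ) ≥ 0`.
-/

lemma Finpartition.sum_parts_sum_eq {α M : Type*} [DecidableEq α] [AddCommMonoid M]
    {s : Finset α} (P : Finpartition s) (f : α → Finset α → M) :
    ∑ C ∈ P.parts, ∑ x ∈ C, f x C = ∑ x ∈ s, f x (P.part x) := by
  calc ∑ C ∈ P.parts, ∑ x ∈ C, f x C = ∑ C ∈ P.parts, ∑ x ∈ id C, f x (P.part x) :=
        sum_congr rfl fun C hC => sum_congr rfl fun x hx => by rw [P.part_eq_of_mem hC hx]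
    _ = ∑ x ∈ s, f x (P.part x) := by
        rw [← sum_biUnion P.supIndep.pairwiseDisjoint, P.biUnion_parts]

lemma Finpartition.exists_part_eq {α : Type*} [Fintype α] [DecidableEq α]
    (f : α → Finset α) (hmem : ∀ a, a ∈ f a) (hf : ∀ a b, b ∈ f a → f b = f a) :
    ∃ τ : Finpartition (univ : Finset α), ∀ a, τ.part a = f a := by
  classical
  refine ⟨ofSetoid (Setoid.ker f), fun a => ?_⟩
  ext b
  rw [mem_part_ofSetoid_iff_rel]
  exact ⟨fun h => h ▸ hmem b, fun h => (hf a b h).symm⟩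

lemma faSW_eq_sum (n : ℕ) (F : Fin n → Finset (Fin n))
    (π : Finpartition (univ : Finset (Fin n))) :
    faSW n F π = ∑ j, faUtil n (F j) j (π.part j) :=
  π.sum_parts_sum_eq fun j C => faUtil n (F j) j C

lemma faUtil_sub_faUtil_le (n : ℕ) (t : Finset (Fin n)) (j : Fin n) (X Y : Finset (Fin n)) :
    faUtil n t j X - faUtil n t j Y ≤ #(X \ Y) + (#(Y \ X) : ℚ) / n := by
  have hfriends : #(X ∩ t) ≤ #(Y ∩ t) + #(X \ Y) :=
    (card_le_card fun x => by grind).trans (card_union_le _ _)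
  have henemies : #(Y \ (t ∪ {j})) ≤ #(X \ (t ∪ {j})) + #(Y \ X) :=
    (card_le_card fun x => by grind).trans (card_union_le _ _)
  have hdiv : ((#(Y \ (t ∪ {j})) : ℚ) - #(X \ (t ∪ {j}))) / n ≤ (#(Y \ X) : ℚ) / n := by
    gcongr
    exact sub_left_le_of_le_add (by exact_mod_cast henemies)
  have : (#(X ∩ t) : ℚ) ≤ #(Y ∩ t) + #(X \ Y) := by exact_mod_cast hfriends
  unfold faUtil
  rw [sub_div] at hdiv
  linarith

lemma faUtil_erase_sub_faUtil_erase (n : ℕ) {j : Fin n} {P A : Finset (Fin n)}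
    (hjP : j ∈ P) (hjA : j ∈ A) :
    faUtil n (P.erase j) j P - faUtil n (P.erase j) j A = #(P \ A) + (#(A \ P) : ℚ) / n := by
  have hclique : P.erase j ∪ {j} = P := by rw [union_comm, ← insert_eq, insert_erase hjP]
  have hcard : #(P \ A) + #((P ∩ A).erase j) + 1 = #P := by
    rw [add_assoc, card_erase_add_one (mem_inter.2 ⟨hjP, hjA⟩), card_sdiff_add_card_inter]
  have hcardQ : (#(P \ A) : ℚ) + #((P ∩ A).erase j) + 1 = #P := by exact_mod_cast hcard
  have hcardP : (#(P.erase j) : ℚ) + 1 = #P := by exact_mod_cast card_erase_add_one hjP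
  unfold faUtil
  rw [hclique, sdiff_self, inter_eq_right.2 (erase_subset j P), inter_erase, inter_comm A P]
  simp only [bot_eq_empty, card_empty, Nat.cast_zero, zero_div, sub_zero]
  linarith

lemma faUtil_exchange_le (n : ℕ) (t : Finset (Fin n)) {j : Fin n} {P A T : Finset (Fin n)}
    (hjP : j ∈ P) (hjA : j ∈ A) (hAPT : A ∩ P ⊆ T) (hTA : T ⊆ A) :
    faUtil n (P.erase j) j A - faUtil n t j T ≤ faUtil n (P.erase j) j P - faUtil n t j P := by
  have hlip := faUtil_sub_faUtil_le n t j P T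
  have hclique := faUtil_erase_sub_faUtil_erase n hjP hjA
  have hPT : #(P \ T) ≤ #(P \ A) := card_le_card fun x => by grind
  have hTP : #(T \ P) ≤ #(A \ P) := card_le_card (sdiff_subset_sdiff hTA subset_rfl)
  have hdiv : (#(T \ P) : ℚ) / n ≤ #(A \ P) / n := by gcongr
  have : (#(P \ T) : ℚ) ≤ #(P \ A) := by exact_mod_cast hPT
  linarith

lemma Finpartition.exists_part_eq_and_inter_subset_part_subset {α : Type*} [Fintype α]
    [DecidableEq α] (σ π : Finpartition (univ : Finset α)) (i : α) :
    ∃ τ : Finpartition (univ : Finset α), τ.part i = σ.part i ∧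
      ∀ j, σ.part j ∩ π.part j ⊆ τ.part j ∧ τ.part j ⊆ σ.part j := by
  have hpart : ∀ (P : Finpartition (univ : Finset α)) j k, k ∈ P.part j ↔ P.part k = P.part j :=
    fun P j k => P.mem_part_iff_part_eq_part (mem_univ k) (mem_univ j)
  obtain ⟨τ, hτ⟩ := exists_part_eq
    (fun j => if j ∈ σ.part i then σ.part i else σ.part j ∩ π.part j)
    (fun j => by split_ifs <;> simp_all)
    (fun j k hk => by
      simp only [hpart] at hk ⊢
      split_ifs at hk ⊢ <;> simp_all)
  refine ⟨τ, by simp [hτ], fun j => ?_⟩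
  rw [hτ]
  split_ifs with hj
  · rw [(hpart σ i j).1 hj]
    exact ⟨inter_subset_left, subset_rfl⟩
  · exact ⟨subset_rfl, inter_subset_left⟩

theorem stmt4_general (n : ℕ) (F F' : Fin n → Finset (Fin n))
    (i : Fin n)
    (π : Finpartition (univ : Finset (Fin n)))
    (hopt : ∀ σ : Finpartition (univ : Finset (Fin n)), faSW n F σ ≤ faSW n F π)
    (hFi : F' i = F i)
    (hF' : ∀ j : Fin n, j ≠ i → ∀ C ∈ π.parts, j ∈ C → F' j = C.erase j) :
    ∀ σ : Finpartition (univ : Finset (Fin n)), faSW n F' σ ≤ faSW n F' π := by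
  intro σ
  obtain ⟨τ, hτi, hτ⟩ := σ.exists_part_eq_and_inter_subset_part_subset π i
  have hagent : ∀ j, faUtil n (F' j) j (σ.part j) - faUtil n (F j) j (τ.part j)
      ≤ faUtil n (F' j) j (π.part j) - faUtil n (F j) j (π.part j) := by
    intro j
    by_cases hji : j = i
    · subst hji
      simp [hτi, hFi]
    · rw [hF' j hji _ (π.part_mem.2 (mem_univ j)) (π.mem_part (mem_univ j))]
      exact faUtil_exchange_le n (F j) (π.mem_part (mem_univ j)) (σ.mem_part (mem_univ j))
        (hτ j).1 (hτ j).2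
  have hsum := sum_le_sum fun j (_ : j ∈ univ) => hagent j
  rw [sum_sub_distrib, sum_sub_distrib] at hsum
  have hτπ := hopt τ
  simp only [faSW_eq_sum] at hτπ ⊢
  linarith

/-- Fix agent `i` and an optimal partition `π` of the FA game `F`. If `F'` keeps
`F' i = F i` and sets `F' j = π(j) \ {j}` for every `j ≠ i` (each coalition of `π`
becomes a bidirectional clique and all other friendships of agents other than `i`
are removed), then `π` is also optimal for `F'`. -/
theorem stmt4 (n : ℕ) (hn : 0 < n) (F F' : Fin n → Finset (Fin n))
    (hF : ∀ j, j ∉ F j) (i : Fin n)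
    (π : Finpartition (univ : Finset (Fin n)))
    (hopt : ∀ σ : Finpartition (univ : Finset (Fin n)), faSW n F σ ≤ faSW n F π)
    (hFi : F' i = F i)
    (hF' : ∀ j : Fin n, j ≠ i → ∀ C ∈ π.parts, j ∈ C → F' j = C.erase j) :
    ∀ σ : Finpartition (univ : Finset (Fin n)), faSW n F' σ ≤ faSW n F' π :=
  stmt4_general n F F' i π hopt hFi hF'
end

section
/- Let the friendship graph of an FA game consist of a bidirectional clique K ⊆ N with |K| ≥ 2 and no other friendship relations (F_j = K \ {j} for j ∈ K and F_j = ∅ for j ∉ K). Then the partition consisting of the coalition K together with every other agent as a singleton coalition is the unique optimal partition. -/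
/-!
A coalition with `a` members of the clique `K` and `b` outsiders has welfare
`a(a-1) - b(2a+b-1)/n`, which is at most `a(|K|-1)`, with equality only if the coalition is `K`
itself or a single outsider. Since the `a`'s of the parts of a partition add up to `|K|`, every
partition has welfare at most `|K|(|K|-1)`, attained exactly when every part is `K` or a single
outsider.
-/

open Finset

namespace Finpartition

variable {α : Type*} [DecidableEq α]

lemma parts_eq_of_subset {s : Finset α} {P Q : Finpartition s} (h : P.parts ⊆ Q.parts) :
    P.parts = Q.parts := by
  refine h.antisymm fun t ht => ?_
  obtain ⟨a, hat⟩ := Q.nonempty_of_mem_parts ht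
  obtain ⟨u, hu, hau⟩ := P.exists_mem (Q.subset ht hat)
  rwa [Q.eq_of_mem_parts ht (h hu) hat hau]

lemma sum_card_inter_mul {R : Type*} [Semiring R] {s t : Finset α} (P : Finpartition s)
    (ht : t ⊆ s) (c : R) : ∑ C ∈ P.parts, (#(C ∩ t) : R) * c = #t * c := by
  rw [← sum_mul, ← Nat.cast_sum, ← (P.restrict ht).sum_card_parts,
    P.sum_restrict ht card card_empty]
  rfl

variable [Fintype α]

def partAndSingletons {K : Finset α} (hK : K.Nonempty) : Finpartition (univ : Finset α) :=
  (⊥ : Finpartition (univ \ K)).extend hK.ne_empty disjoint_sdiff_self_left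
    (sdiff_union_of_subset (subset_univ K))

lemma parts_partAndSingletons {K : Finset α} (hK : K.Nonempty) :
    (partAndSingletons hK).parts = insert K ((univ \ K).image singleton) := by
  simp [partAndSingletons, map_eq_image]

lemma forall_parts_eq_or_singleton_iff {K : Finset α} (hK : K.Nonempty)
    (P : Finpartition (univ : Finset α)) :
    (∀ C ∈ P.parts, C = K ∨ ∃ j ∉ K, C = {j}) ↔
      P.parts = insert K ((univ \ K).image singleton) := by
  constructor
  · intro h
    refine (parts_eq_of_subset fun C hC => ?_).trans (parts_partAndSingletons hK)
    rw [parts_partAndSingletons hK]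
    rcases h C hC with rfl | ⟨j, hj, rfl⟩ <;> simp [*]
  · rintro h C hC
    simp only [h, mem_insert, mem_image, mem_sdiff, mem_univ, true_and] at hC
    rcases hC with rfl | ⟨j, hj, rfl⟩
    exacts [Or.inl rfl, Or.inr ⟨j, hj, rfl⟩]

end Finpartition

section CoalitionValue

lemma mul_add_sub_one_nonneg (a b : ℕ) : (0 : ℚ) ≤ b * (2 * a + b - 1) := by
  rcases b.eq_zero_or_pos with rfl | hb
  · simp
  · have : (1 : ℚ) ≤ b := by exact_mod_cast hb
    exact mul_nonneg b.cast_nonneg (by linarith [a.cast_nonneg (α := ℚ)])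

-- `a(a-1) - b(2a+b-1)/x` is the welfare of a coalition with `a` clique members and `b` outsiders
-- when `x = n` (see `sum_faUtil_clique`).
variable {a b k : ℕ} {x : ℚ}

lemma coalitionValue_le (hx : 0 < x) (hak : a ≤ k) :
    (a : ℚ) * (a - 1) - b * (2 * a + b - 1) / x ≤ a * (k - 1) := by
  have hak' : (a : ℚ) ≤ k := by exact_mod_cast hak
  have := div_nonneg (mul_add_sub_one_nonneg a b) hx.le
  nlinarith

lemma coalitionValue_eq_iff (hx : 0 < x) (hak : a ≤ k) :
    (a : ℚ) * (a - 1) - b * (2 * a + b - 1) / x = a * (k - 1) ↔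
      (a = 0 ∨ a = k) ∧ (b = 0 ∨ a = 0 ∧ b = 1) := by
  have hak' : (a : ℚ) ≤ k := by exact_mod_cast hak
  have hgap : (a : ℚ) * (a - 1) - b * (2 * a + b - 1) / x = a * (k - 1) ↔
      (a : ℚ) * (k - a) + b * (2 * a + b - 1) / x = 0 := by
    constructor <;> intro h <;> linarith
  rw [hgap, add_eq_zero_iff_of_nonneg (by positivity)
    (div_nonneg (mul_add_sub_one_nonneg a b) hx.le), div_eq_zero_iff, or_iff_left hx.ne',
    mul_eq_zero, mul_eq_zero, sub_eq_zero, sub_eq_zero]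
  norm_cast
  omega

end CoalitionValue

section CliqueGame

variable {n : ℕ}

lemma faUtil_erase_of_mem {K C : Finset (Fin n)} {i : Fin n} (hiK : i ∈ K) (hiC : i ∈ C) :
    faUtil n (K.erase i) i C = ((#(C ∩ K) : ℚ) - 1) - #(C \ K) / n := by
  have hi : i ∈ C ∩ K := mem_inter.2 ⟨hiC, hiK⟩
  rw [faUtil, union_singleton, insert_erase hiK, inter_erase, card_erase_of_mem hi,
    Nat.cast_pred (card_pos.2 ⟨i, hi⟩)]

lemma faUtil_empty_of_mem {C : Finset (Fin n)} {i : Fin n} (hiC : i ∈ C) :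
    faUtil n ∅ i C = -((#C : ℚ) - 1) / n := by
  rw [faUtil, empty_union, inter_empty, card_empty, sdiff_singleton_eq_erase,
    card_erase_of_mem hiC, Nat.cast_pred (card_pos.2 ⟨i, hiC⟩)]
  ring

lemma sum_faUtil_clique {F : Fin n → Finset (Fin n)} {K : Finset (Fin n)}
    (hFK : ∀ j ∈ K, F j = K.erase j) (hFout : ∀ j, j ∉ K → F j = ∅) (C : Finset (Fin n)) :
    ∑ i ∈ C, faUtil n (F i) i C =
      (#(C ∩ K) : ℚ) * (#(C ∩ K) - 1) - #(C \ K) * (2 * #(C ∩ K) + #(C \ K) - 1) / n := by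
  have hin : ∀ i ∈ C ∩ K, faUtil n (F i) i C = ((#(C ∩ K) : ℚ) - 1) - #(C \ K) / n :=
    fun i hi => by
      rw [hFK i (mem_inter.1 hi).2, faUtil_erase_of_mem (mem_inter.1 hi).2 (mem_inter.1 hi).1]
  have hout : ∀ i ∈ C \ K, faUtil n (F i) i C = -((#C : ℚ) - 1) / n :=
    fun i hi => by rw [hFout i (mem_sdiff.1 hi).2, faUtil_empty_of_mem (mem_sdiff.1 hi).1]
  rw [← sum_inter_add_sum_sdiff C K, sum_congr rfl hin, sum_congr rfl hout, sum_const, sum_const,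
    nsmul_eq_mul, nsmul_eq_mul, ← card_inter_add_card_sdiff C K]
  push_cast
  ring

variable {F : Fin n → Finset (Fin n)} {K : Finset (Fin n)}

lemma sum_faUtil_clique_le (hn : 0 < n) (hFK : ∀ j ∈ K, F j = K.erase j)
    (hFout : ∀ j, j ∉ K → F j = ∅) (C : Finset (Fin n)) :
    ∑ i ∈ C, faUtil n (F i) i C ≤ #(C ∩ K) * ((#K : ℚ) - 1) := by
  rw [sum_faUtil_clique hFK hFout]
  exact coalitionValue_le (by exact_mod_cast hn) (card_le_card inter_subset_right)

lemma sum_faUtil_clique_eq_iff (hn : 0 < n) (hFK : ∀ j ∈ K, F j = K.erase j)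
    (hFout : ∀ j, j ∉ K → F j = ∅) {C : Finset (Fin n)} (hC : C.Nonempty) :
    ∑ i ∈ C, faUtil n (F i) i C = #(C ∩ K) * ((#K : ℚ) - 1) ↔ C = K ∨ ∃ j ∉ K, C = {j} := by
  rw [sum_faUtil_clique hFK hFout,
    coalitionValue_eq_iff (by exact_mod_cast hn) (card_le_card inter_subset_right)]
  constructor
  · rintro ⟨hK, hout | ⟨hin, hout⟩⟩
    · have hCK : C ⊆ K := sdiff_eq_empty_iff_subset.1 (card_eq_zero.1 hout)
      rw [inter_eq_left.2 hCK] at hK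
      refine Or.inl (eq_of_subset_of_card_le hCK ?_)
      rcases hK with h | h
      · exact absurd h hC.card_pos.ne'
      · exact h.ge
    · have hdisj : Disjoint C K := disjoint_iff_inter_eq_empty.2 (card_eq_zero.1 hin)
      rw [sdiff_eq_self_of_disjoint hdisj] at hout
      obtain ⟨j, rfl⟩ := card_eq_one.1 hout
      exact Or.inr ⟨j, disjoint_singleton_left.1 hdisj, rfl⟩
  · rintro (rfl | ⟨j, hj, rfl⟩)
    · simp
    · simp [hj, sdiff_eq_self_of_disjoint (disjoint_singleton_left.2 hj)]

lemma faSW_clique_le (hn : 0 < n) (hFK : ∀ j ∈ K, F j = K.erase j)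
    (hFout : ∀ j, j ∉ K → F j = ∅) (σ : Finpartition (univ : Finset (Fin n))) :
    faSW n F σ ≤ #K * ((#K : ℚ) - 1) :=
  calc faSW n F σ ≤ ∑ C ∈ σ.parts, #(C ∩ K) * ((#K : ℚ) - 1) :=
        sum_le_sum fun C _ => sum_faUtil_clique_le hn hFK hFout C
    _ = #K * ((#K : ℚ) - 1) := σ.sum_card_inter_mul (subset_univ K) _

lemma faSW_clique_eq_iff (hn : 0 < n) (hFK : ∀ j ∈ K, F j = K.erase j)
    (hFout : ∀ j, j ∉ K → F j = ∅) (σ : Finpartition (univ : Finset (Fin n))) :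
    faSW n F σ = #K * ((#K : ℚ) - 1) ↔ ∀ C ∈ σ.parts, C = K ∨ ∃ j ∉ K, C = {j} := by
  rw [← σ.sum_card_inter_mul (subset_univ K), faSW,
    sum_eq_sum_iff_of_le fun C _ => sum_faUtil_clique_le hn hFK hFout C]
  exact forall₂_congr fun C hC => sum_faUtil_clique_eq_iff hn hFK hFout
    (σ.nonempty_of_mem_parts hC)

end CliqueGame

theorem stmt5_general (n : ℕ) (F : Fin n → Finset (Fin n))
    (K : Finset (Fin n)) (hK : 2 ≤ K.card)
    (hFK : ∀ j ∈ K, F j = K.erase j)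
    (hFout : ∀ j : Fin n, j ∉ K → F j = ∅) :
    ∀ π : Finpartition (univ : Finset (Fin n)),
      (∀ σ : Finpartition (univ : Finset (Fin n)), faSW n F σ ≤ faSW n F π) ↔
        π.parts = insert K
          (((univ : Finset (Fin n)) \ K).image fun j => ({j} : Finset (Fin n))) := by
  intro π
  have hKne : K.Nonempty := card_pos.1 (by omega)
  have hn : 0 < n := hKne.choose.pos
  have hτ := (faSW_clique_eq_iff hn hFK hFout _).2
    ((Finpartition.forall_parts_eq_or_singleton_iff hKne _).2
      (Finpartition.parts_partAndSingletons hKne))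
  rw [← Finpartition.forall_parts_eq_or_singleton_iff hKne, ← faSW_clique_eq_iff hn hFK hFout]
  exact ⟨fun hopt => (faSW_clique_le hn hFK hFout π).antisymm (hτ ▸ hopt _),
    fun h σ => h ▸ faSW_clique_le hn hFK hFout σ⟩

/-- If the friendship graph consists of a bidirectional clique `K` with `|K| ≥ 2` and
no other friendship relations, then a partition is optimal iff its coalitions are
exactly `K` together with all other agents as singletons (unique optimal partition). -/
theorem stmt5 (n : ℕ) (hn : 0 < n) (F : Fin n → Finset (Fin n))
    (K : Finset (Fin n)) (hK : 2 ≤ K.card)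
    (hFK : ∀ j ∈ K, F j = K.erase j)
    (hFout : ∀ j : Fin n, j ∉ K → F j = ∅) :
    ∀ π : Finpartition (univ : Finset (Fin n)),
      (∀ σ : Finpartition (univ : Finset (Fin n)), faSW n F σ ≤ faSW n F π) ↔
        π.parts = insert K
          (((univ : Finset (Fin n)) \ K).image fun j => ({j} : Finset (Fin n))) :=
  stmt5_general n F K hK hFK hFout
end

section
/- In the reduced FA instance, if π* is an optimal partition, then no coalition of π* contains two distinct set-cliques, i.e., there are no C ∈ π* and j ≠ j' with K^j_X ∪ K^{j'}_X ⊆ C. -/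
open Finset

/-- The reduced FA instance built from a `3`-Partition instance `x : Fin (3m) → ℕ`:
the `n` agents are the disjoint union of element-cliques `elemClique h` of size `x h`
and set-cliques `setClique k` of size `X = 4m²T`; each clique is bidirectional, and
between each element-clique and each set-clique there is a perfect matching of the
element-clique into the set-clique; no other friendship relations exist. -/
structure ReducedFA (m T n : ℕ) (x : Fin (3 * m) → ℕ) where
  F : Fin n → Finset (Fin n)
  elemClique : Fin (3 * m) → Finset (Fin n)
  setClique : Fin m → Finset (Fin n)
  irrefl : ∀ a, a ∉ F a
  symm : ∀ a b, a ∈ F b → b ∈ F a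
  elem_card : ∀ h, (elemClique h).card = x h
  set_card : ∀ k, (setClique k).card = 4 * m ^ 2 * T
  elem_disj : ∀ h h', h ≠ h' → Disjoint (elemClique h) (elemClique h')
  set_disj : ∀ k k', k ≠ k' → Disjoint (setClique k) (setClique k')
  elem_set_disj : ∀ h k, Disjoint (elemClique h) (setClique k)
  cover : (Finset.univ.biUnion elemClique) ∪ (Finset.univ.biUnion setClique)
    = (Finset.univ : Finset (Fin n))
  elem_clique : ∀ h, ∀ a ∈ elemClique h, ∀ b ∈ elemClique h, a ≠ b → b ∈ F a
  set_clique : ∀ k, ∀ a ∈ setClique k, ∀ b ∈ setClique k, a ≠ b → b ∈ F a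
  matching : ∀ (h : Fin (3 * m)) (k : Fin m), ∀ a ∈ elemClique h,
    (setClique k ∩ F a).card = 1
  matching_inj : ∀ (h : Fin (3 * m)) (k : Fin m), ∀ b ∈ setClique k,
    (elemClique h ∩ F b).card ≤ 1
  elem_elem : ∀ h h', h ≠ h' → ∀ a ∈ elemClique h, ∀ b ∈ elemClique h', b ∉ F a
  set_set : ∀ k k', k ≠ k' → ∀ a ∈ setClique k, ∀ b ∈ setClique k', b ∉ F a

/-!
Splitting a coalition `C = A ∪ B` (disjoint) changes the welfare by `2 (E - (|A| |B| - E) / n)`,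
where `E` is the number of friendships between `A` and `B`, so splitting is a strict improvement
as soon as `(n + 1) E < |A| |B|`. Take `A = K^{j'}_X` and `B = C \ A ⊇ K^j_X`. An agent outside
`K^{j'}_X` has a friend in it only if it is an element agent, and then exactly one, so `E ≤ mT`,
while `|A| |B| ≥ X² = 16 m⁴ T² > (n + 1) m T`.
-/

namespace Finpartition

variable {α : Type*} [DistribLattice α] [OrderBot α] [DecidableEq α] {s a b c : α}

def splitPart (P : Finpartition s) (hc : c ∈ P.parts) (ha : a ≠ ⊥) (hb : b ≠ ⊥)
    (hab : Disjoint a b) (habc : a ⊔ b = c) : Finpartition s where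
  parts := insert a (insert b (P.parts.erase c))
  supIndep := by
    have hle : ∀ {d}, d ≤ c → ∀ e ∈ P.parts.erase c, Disjoint d e := fun hd e he =>
      (P.disjoint hc (mem_erase.mp he).2 (mem_erase.mp he).1.symm).mono_left hd
    rw [supIndep_iff_pairwiseDisjoint, coe_insert, coe_insert]
    refine (((P.disjoint.subset (erase_subset c P.parts)).insert ?_).insert ?_)
    · exact fun e he _ => hle (habc ▸ le_sup_right) e he
    · rintro e (rfl | he) -
      · exact hab
      · exact hle (habc ▸ le_sup_left) e he
  sup_parts := by
    conv_rhs => rw [← P.sup_parts, ← insert_erase hc, sup_insert]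
    rw [sup_insert, sup_insert, ← sup_assoc]
    exact congrArg (· ⊔ _) habc
  bot_notMem := by
    simp only [mem_insert, mem_erase, not_or]
    exact ⟨ha.symm, hb.symm, fun h => P.bot_notMem h.2⟩

lemma sum_parts_lt_sum_splitPart {M : Type*} [AddCommMonoid M] [PartialOrder M]
    [IsOrderedCancelAddMonoid M] (P : Finpartition s) (hc : c ∈ P.parts) (ha : a ≠ ⊥)
    (hb : b ≠ ⊥) (hab : Disjoint a b) (habc : a ⊔ b = c) {f : α → M} (hf : f c < f a + f b) :
    ∑ d ∈ P.parts, f d < ∑ d ∈ (P.splitPart hc ha hb hab habc).parts, f d := by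
  have not_mem_erase : ∀ {d}, d ≠ ⊥ → d ≤ c → d ∉ P.parts.erase c := fun hd hdc hmem =>
    hd (((P.disjoint (mem_erase.mp hmem).2 hc
      (mem_erase.mp hmem).1).mono_right hdc).eq_bot_of_self)
  have hane : a ≠ b := fun h => ha (disjoint_self.mp (h ▸ hab))
  have ha' : a ∉ insert b (P.parts.erase c) := by
    rw [mem_insert, not_or]
    exact ⟨hane, not_mem_erase ha (habc ▸ le_sup_left)⟩
  rw [splitPart, sum_insert ha', sum_insert (not_mem_erase hb (habc ▸ le_sup_right)),
    ← add_sum_erase _ _ hc, ← add_assoc]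
  exact add_lt_add_left hf _

end Finpartition

lemma sum_card_inter_comm {α : Type*} [DecidableEq α] {F : α → Finset α}
    (hF : ∀ a b, a ∈ F b → b ∈ F a) (A B : Finset α) :
    ∑ a ∈ A, #(B ∩ F a) = ∑ b ∈ B, #(A ∩ F b) := by
  convert sum_card_bipartiteAbove_eq_sum_card_bipartiteBelow (r := fun a b => b ∈ F a)
    using 3 with a - b -
  · rw [bipartiteAbove, filter_mem_eq_inter]
  · rw [bipartiteBelow, ← filter_mem_eq_inter]
    exact filter_congr fun a _ => ⟨hF a b, hF b a⟩

section FA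

variable {n : ℕ}

def faCoalitionSW (n : ℕ) (F : Fin n → Finset (Fin n)) (C : Finset (Fin n)) : ℚ :=
  ∑ i ∈ C, faUtil n (F i) i C

lemma faUtil_union_of_notMem {t A B : Finset (Fin n)} {i : Fin n} (hAB : Disjoint A B)
    (hi : i ∉ B) :
    faUtil n t i (A ∪ B) = faUtil n t i A + (#(B ∩ t) - (#B - #(B ∩ t)) / n) := by
  have hBt : B \ (t ∪ {i}) = B \ t := by
    rw [sdiff_union_distrib, inter_eq_left]
    exact sdiff_subset.trans (subset_sdiff.mpr ⟨subset_rfl, by simpa using hi⟩)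
  have hcard : (#(B \ t) : ℚ) = #B - #(B ∩ t) := by
    rw [eq_sub_iff_add_eq, ← Nat.cast_add, card_sdiff_add_card_inter]
  unfold faUtil
  rw [union_inter_distrib_right, union_sdiff_distrib,
    card_union_of_disjoint (hAB.mono inter_subset_left inter_subset_left),
    card_union_of_disjoint (hAB.mono sdiff_subset sdiff_subset), hBt]
  push_cast
  rw [hcard]
  ring

lemma faCoalitionSW_union {F : Fin n → Finset (Fin n)} (hF : ∀ a b, a ∈ F b → b ∈ F a)
    {A B : Finset (Fin n)} (hAB : Disjoint A B) :
    faCoalitionSW n F (A ∪ B) = faCoalitionSW n F A + faCoalitionSW n F B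
      + 2 * ((∑ b ∈ B, #(A ∩ F b) : ℕ) - (#A * #B - (∑ b ∈ B, #(A ∩ F b) : ℕ)) / n) := by
  have hA : ∑ i ∈ A, faUtil n (F i) i (A ∪ B) = faCoalitionSW n F A
      + ((∑ a ∈ A, #(B ∩ F a) : ℕ) - (#A * #B - (∑ a ∈ A, #(B ∩ F a) : ℕ)) / n) := by
    rw [sum_congr rfl fun i hi => faUtil_union_of_notMem hAB (disjoint_left.mp hAB hi)]
    push_cast
    rw [sum_add_distrib, sum_sub_distrib, ← sum_div, sum_sub_distrib,
      sum_const, nsmul_eq_mul]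
    rfl
  have hB : ∑ i ∈ B, faUtil n (F i) i (A ∪ B) = faCoalitionSW n F B
      + ((∑ b ∈ B, #(A ∩ F b) : ℕ) - (#B * #A - (∑ b ∈ B, #(A ∩ F b) : ℕ)) / n) := by
    rw [sum_congr rfl fun i hi =>
      (congrArg _ (union_comm A B)).trans
        (faUtil_union_of_notMem hAB.symm (disjoint_right.mp hAB hi))]
    push_cast
    rw [sum_add_distrib, sum_sub_distrib, ← sum_div, sum_sub_distrib,
      sum_const, nsmul_eq_mul]
    rfl
  rw [faCoalitionSW, sum_union hAB, hA, hB, sum_card_inter_comm hF]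
  ring

lemma faCoalitionSW_union_lt {F : Fin n → Finset (Fin n)} (hF : ∀ a b, a ∈ F b → b ∈ F a)
    {A B : Finset (Fin n)} (hAB : Disjoint A B)
    (hlt : (n + 1) * ∑ b ∈ B, #(A ∩ F b) < #A * #B) :
    faCoalitionSW n F (A ∪ B) < faCoalitionSW n F A + faCoalitionSW n F B := by
  obtain ⟨a, -⟩ := card_pos.mp (Nat.pos_of_mul_pos_right (Nat.zero_lt_of_lt hlt))
  have hn : (0 : ℚ) < n := by exact_mod_cast a.pos
  set E := ∑ b ∈ B, #(A ∩ F b)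
  have hltq : ((n : ℚ) + 1) * E < #A * #B := by exact_mod_cast hlt
  have hgain : (E : ℚ) < (#A * #B - E) / n := (lt_div_iff₀ hn).mpr (by linarith)
  rw [faCoalitionSW_union hF hAB]
  linarith

end FA

namespace ReducedFA

variable {m T n : ℕ} {x : Fin (3 * m) → ℕ} (R : ReducedFA m T n x)

def elemAgents : Finset (Fin n) := univ.biUnion R.elemClique

lemma card_elemAgents_le : #R.elemAgents ≤ ∑ h, x h :=
  card_biUnion_le.trans_eq (sum_congr rfl fun h _ => R.elem_card h)

lemma setClique_inter_friends_eq_empty {k : Fin m} {b : Fin n} (hb : b ∉ R.setClique k)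
    (hbe : b ∉ R.elemAgents) : R.setClique k ∩ R.F b = ∅ := by
  have hb_cover : b ∈ R.elemAgents ∪ univ.biUnion R.setClique := R.cover ▸ mem_univ b
  obtain ⟨k', -, hbk'⟩ := mem_biUnion.mp ((mem_union.mp hb_cover).resolve_left hbe)
  have hkk' : k' ≠ k := by rintro rfl; exact hb hbk'
  exact eq_empty_of_forall_notMem fun a ha =>
    R.set_set k' k hkk' b hbk' a (mem_inter.mp ha).1 (mem_inter.mp ha).2

lemma sum_card_setClique_inter_friends_le {k : Fin m} {B : Finset (Fin n)}
    (hB : Disjoint B (R.setClique k)) : ∑ b ∈ B, #(R.setClique k ∩ R.F b) ≤ ∑ h, x h := by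
  have hle : ∀ b ∈ B, #(R.setClique k ∩ R.F b) ≤ if b ∈ R.elemAgents then 1 else 0 := by
    intro b hb
    split_ifs with hbe
    · obtain ⟨h, -, hbh⟩ := mem_biUnion.mp hbe
      exact (R.matching h k b hbh).le
    · rw [R.setClique_inter_friends_eq_empty (disjoint_left.mp hB hb) hbe,
        card_empty]
  calc ∑ b ∈ B, #(R.setClique k ∩ R.F b)
      ≤ ∑ b ∈ B, if b ∈ R.elemAgents then 1 else 0 := sum_le_sum hle
    _ = #{b ∈ B | b ∈ R.elemAgents} := sum_boole _ _
    _ ≤ #R.elemAgents := card_le_card fun b hb => (mem_filter.mp hb).2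
    _ ≤ ∑ h, x h := R.card_elemAgents_le

end ReducedFA

lemma succ_mul_lt_mul_self_of_eq {m T n : ℕ} (hm : 0 < m) (hT : 0 < T)
    (hn : n = m * T + 4 * m ^ 3 * T) : (n + 1) * (m * T) < 4 * m ^ 2 * T * (4 * m ^ 2 * T) := by
  subst hn
  have hmT : m * T ≤ m ^ 4 * T ^ 2 :=
    Nat.mul_le_mul (Nat.le_self_pow (by norm_num) m) (Nat.le_self_pow (by norm_num) T)
  have hm2 : m ^ 2 * T ^ 2 ≤ m ^ 4 * T ^ 2 :=
    Nat.mul_le_mul_right _ (Nat.pow_le_pow_right hm (by norm_num))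
  have hpos : 0 < m ^ 4 * T ^ 2 := by positivity
  nlinarith

theorem stmt8_general (m T n : ℕ) (hm : 0 < m) (hT : 0 < T)
    (x : Fin (3 * m) → ℕ)
    (hsum : ∑ h, x h = m * T)
    (hn : n = m * T + 4 * m ^ 3 * T)
    (R : ReducedFA m T n x)
    (π : Finpartition (univ : Finset (Fin n)))
    (hopt : ∀ σ : Finpartition (univ : Finset (Fin n)), faSW n R.F σ ≤ faSW n R.F π) :
    ∀ C ∈ π.parts, ∀ j j' : Fin m, j ≠ j' →
      ¬(R.setClique j ∪ R.setClique j' ⊆ C) := by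
  intro C hC j j' hjj' hsub
  set A := R.setClique j'
  have hAC : A ⊆ C := union_subset_right hsub
  have hjB : R.setClique j ⊆ C \ A :=
    subset_sdiff.mpr ⟨union_subset_left hsub, R.set_disj j j' hjj'⟩
  have hX : 0 < 4 * m ^ 2 * T := by positivity
  have hcross : (n + 1) * ∑ b ∈ C \ A, #(A ∩ R.F b) < #A * #(C \ A) :=
    calc (n + 1) * ∑ b ∈ C \ A, #(A ∩ R.F b)
        ≤ (n + 1) * (m * T) :=
          Nat.mul_le_mul_left _ (hsum ▸ R.sum_card_setClique_inter_friends_le sdiff_disjoint)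
      _ < 4 * m ^ 2 * T * (4 * m ^ 2 * T) := succ_mul_lt_mul_self_of_eq hm hT hn
      _ ≤ #A * #(C \ A) := by
          rw [R.set_card j']
          exact Nat.mul_le_mul_left _ (R.set_card j ▸ card_le_card hjB)
  have hsplit := faCoalitionSW_union_lt R.symm disjoint_sdiff hcross
  rw [union_sdiff_of_subset hAC] at hsplit
  have hAne : A ≠ ∅ := nonempty_iff_ne_empty.mp (card_pos.mp (R.set_card j' ▸ hX))
  have hBne : C \ A ≠ ∅ := nonempty_iff_ne_empty.mp
    ((card_pos.mp (R.set_card j ▸ hX)).mono hjB)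
  exact (hopt _).not_gt (π.sum_parts_lt_sum_splitPart hC hAne hBne disjoint_sdiff
    (union_sdiff_of_subset hAC) hsplit)

/-- In the reduced FA instance, no coalition of an optimal partition contains two
distinct set-cliques. -/
theorem stmt8 (m T n : ℕ) (hm : 0 < m) (hT : 0 < T)
    (x : Fin (3 * m) → ℕ)
    (hsum : ∑ h, x h = m * T)
    (hx : ∀ h, T < 4 * x h ∧ 2 * x h < T)
    (hn : n = m * T + 4 * m ^ 3 * T)
    (R : ReducedFA m T n x)
    (π : Finpartition (univ : Finset (Fin n)))
    (hopt : ∀ σ : Finpartition (univ : Finset (Fin n)), faSW n R.F σ ≤ faSW n R.F π) :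
    ∀ C ∈ π.parts, ∀ j j' : Fin m, j ≠ j' →
      ¬(R.setClique j ∪ R.setClique j' ⊆ C) :=
  stmt8_general m T n hm hT x hsum hn R π hopt
end

section
/- In the reduced FA instance, if π* is an optimal partition, then for each j ∈ [m] there exists a coalition C ∈ π* with K^j_X ⊆ C (no set-clique is split across coalitions). -/
open Finset

section aux
variable {n : ℕ}

/-- ordered friend-pairs between `A` and `B`. -/
def fp (F : Fin n → Finset (Fin n)) (A B : Finset (Fin n)) : ℕ :=
  ∑ i ∈ A, (B ∩ F i).card

/-- ordered enemy-pairs between `A` and `B`. -/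
def ep (F : Fin n → Finset (Fin n)) (A B : Finset (Fin n)) : ℕ :=
  ∑ i ∈ A, (B \ (F i ∪ {i})).card


/-- rational welfare of a single coalition. -/
def Wq (F : Fin n → Finset (Fin n)) (C : Finset (Fin n)) : ℚ :=
  (fp F C C : ℚ) - (ep F C C : ℚ) / (n : ℚ)

lemma sum_faUtil (F : Fin n → Finset (Fin n)) (C : Finset (Fin n)) :
    ∑ i ∈ C, faUtil n (F i) i C = Wq F C := by
  simp only [faUtil, Wq, fp, ep]
  push_cast
  rw [Finset.sum_sub_distrib, Finset.sum_div]

lemma fp_comm (F : Fin n → Finset (Fin n)) (hs : ∀ a b, a ∈ F b → b ∈ F a)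
    (A B : Finset (Fin n)) : fp F A B = fp F B A := by
  unfold fp
  simp only [show ∀ (B : Finset (Fin n)) i, B ∩ F i = B.filter (· ∈ F i) from fun _ _ => rfl,
    Finset.card_filter]
  rw [Finset.sum_comm]
  refine Finset.sum_congr rfl fun j _ => Finset.sum_congr rfl fun i _ => ?_
  congr 1
  simp only [eq_iff_iff]
  exact ⟨fun h => hs _ _ h, fun h => hs _ _ h⟩

lemma fp_union_left (F : Fin n → Finset (Fin n)) {A B : Finset (Fin n)} (h : Disjoint A B)
    (C : Finset (Fin n)) : fp F (A ∪ B) C = fp F A C + fp F B C :=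
  Finset.sum_union h

lemma fp_union_right (F : Fin n → Finset (Fin n)) (A : Finset (Fin n)) {B C : Finset (Fin n)}
    (h : Disjoint B C) : fp F A (B ∪ C) = fp F A B + fp F A C := by
  unfold fp
  rw [← Finset.sum_add_distrib]
  refine Finset.sum_congr rfl fun i _ => ?_
  rw [Finset.union_inter_distrib_right, Finset.card_union_of_disjoint
    (h.mono inter_subset_left inter_subset_left)]

lemma ep_union_left (F : Fin n → Finset (Fin n)) {A B : Finset (Fin n)} (h : Disjoint A B)
    (C : Finset (Fin n)) : ep F (A ∪ B) C = ep F A C + ep F B C :=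
  Finset.sum_union h

lemma ep_union_right (F : Fin n → Finset (Fin n)) (A : Finset (Fin n)) {B C : Finset (Fin n)}
    (h : Disjoint B C) : ep F A (B ∪ C) = ep F A B + ep F A C := by
  unfold ep
  rw [← Finset.sum_add_distrib]
  refine Finset.sum_congr rfl fun i _ => ?_
  rw [Finset.union_sdiff_distrib, Finset.card_union_of_disjoint
    (h.mono sdiff_subset sdiff_subset)]

lemma fp_mono_right (F : Fin n → Finset (Fin n)) (A : Finset (Fin n)) {B B' : Finset (Fin n)}
    (h : B ⊆ B') : fp F A B ≤ fp F A B' :=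
  Finset.sum_le_sum fun _ _ => Finset.card_le_card (Finset.inter_subset_inter h (Finset.Subset.refl _))

lemma fp_clique (F : Fin n → Finset (Fin n)) (hirr : ∀ a, a ∉ F a) {K : Finset (Fin n)}
    (hcl : ∀ a ∈ K, ∀ b ∈ K, a ≠ b → b ∈ F a) :
    fp F K K = K.card * (K.card - 1) := by
  unfold fp
  have h : ∀ i ∈ K, K ∩ F i = K.erase i := by
    intro i hi
    ext b
    simp only [mem_inter, mem_erase]
    constructor
    · rintro ⟨hb, hbf⟩
      exact ⟨fun hbi => hirr i (hbi ▸ hbf), hb⟩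
    · rintro ⟨hne, hb⟩
      exact ⟨hb, hcl i hi b hb (fun h' => hne h'.symm)⟩
  rw [Finset.sum_congr rfl fun i hi => by rw [h i hi, Finset.card_erase_of_mem hi]]
  rw [Finset.sum_const, smul_eq_mul]

lemma ep_clique (F : Fin n → Finset (Fin n)) {K : Finset (Fin n)}
    (hcl : ∀ a ∈ K, ∀ b ∈ K, a ≠ b → b ∈ F a) : ep F K K = 0 := by
  unfold ep
  refine Finset.sum_eq_zero fun i hi => ?_
  rw [Finset.card_eq_zero, Finset.sdiff_eq_empty_iff_subset]
  intro b hb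
  by_cases hbi : b = i
  · simp [hbi]
  · exact Finset.mem_union_left _ (hcl i hi b hb fun h' => hbi h'.symm)

lemma sum_parts_inter (π : Finpartition (univ : Finset (Fin n))) (K : Finset (Fin n))
    (f : Fin n → ℕ) : ∑ C ∈ π.parts, ∑ i ∈ C ∩ K, f i = ∑ i ∈ K, f i := by
  rw [← Finset.sum_biUnion (s := π.parts) (t := fun C => C ∩ K) (f := f)
    (fun C hC C' hC' hne =>
      (π.disjoint hC hC' hne).mono inter_subset_left inter_subset_left)]
  congr 1
  ext a
  simp only [mem_biUnion, mem_inter]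
  constructor
  · rintro ⟨C, _, _, ha⟩; exact ha
  · intro ha
    obtain ⟨C, hC, haC⟩ := π.exists_mem (mem_univ a)
    exact ⟨C, hC, haC, ha⟩

end aux

/-- In the reduced FA instance, every set-clique is entirely contained in a single
coalition of any optimal partition. -/
theorem stmt9 (m T n : ℕ) (hm : 0 < m) (hT : 0 < T)
    (x : Fin (3 * m) → ℕ)
    (hsum : ∑ h, x h = m * T)
    (hx : ∀ h, T < 4 * x h ∧ 2 * x h < T)
    (hn : n = m * T + 4 * m ^ 3 * T)
    (R : ReducedFA m T n x)
    (π : Finpartition (univ : Finset (Fin n)))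
    (hopt : ∀ σ : Finpartition (univ : Finset (Fin n)), faSW n R.F σ ≤ faSW n R.F π) :
    ∀ j : Fin m, ∃ C ∈ π.parts, R.setClique j ⊆ C := by
  classical
  intro j
  by_contra hcon
  push_neg at hcon
  set X := 4 * m ^ 2 * T with hXdef
  set K := R.setClique j with hKdef
  have hcl : ∀ a ∈ K, ∀ b ∈ K, a ≠ b → b ∈ R.F a := R.set_clique j
  have hKcard : K.card = X := R.set_card j
  have hmatch : ∀ h a, a ∈ R.elemClique h → (K ∩ R.F a).card = 1 :=
    fun h a ha => R.matching h j a ha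
  have hss : ∀ k, k ≠ j → ∀ a ∈ R.setClique k, ∀ b ∈ K, b ∉ R.F a :=
    fun k hk a ha b hb => R.set_set k j hk a ha b hb
  have hXpos : 0 < X := by positivity
  have hKne : K.Nonempty := card_pos.mp (hKcard ▸ hXpos)
  -- the modified partition: pull K out into its own coalition
  set t := π.parts.filter (fun C => (C \ K).Nonempty) with htdef
  have timg_ne : K ∉ t.image (fun C => C \ K) := by
    rw [mem_image]
    rintro ⟨C, hC, hCK⟩
    obtain ⟨a, ha⟩ := hKne
    have ha' := ha
    rw [← hCK] at ha'
    exact (mem_sdiff.mp ha').2 ha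
  have hinj : ∀ C ∈ t, ∀ C' ∈ t, C \ K = C' \ K → C = C' := by
    intro C hC C' hC' heq
    by_contra hne
    have hd : Disjoint (C \ K) (C' \ K) :=
      (π.disjoint (mem_coe.mpr (filter_subset _ _ hC))
        (mem_coe.mpr (filter_subset _ _ hC')) hne).mono sdiff_subset sdiff_subset
    rw [heq] at hd
    exact ((mem_filter.mp hC').2).ne_empty (disjoint_self.mp hd)
  set sparts := insert K (t.image (fun C => C \ K)) with hspdef
  have hsdisj : (↑sparts : Set (Finset (Fin n))).PairwiseDisjoint id := by
    intro D hD D' hD' hne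
    simp only [hspdef, coe_insert, Set.mem_insert_iff, coe_image, Set.mem_image, mem_coe] at hD hD'
    have hKC : ∀ C : Finset (Fin n), Disjoint K (C \ K) :=
      fun C => disjoint_left.mpr fun a ha hb => (mem_sdiff.mp hb).2 ha
    rcases hD with rfl | ⟨C, hC, rfl⟩ <;> rcases hD' with rfl | ⟨C', hC', rfl⟩
    · exact absurd rfl hne
    · exact hKC C'
    · exact (hKC C).symm
    · have hCC' : C ≠ C' := fun h => hne (by rw [h])
      exact (π.disjoint (mem_coe.mpr (filter_subset _ _ hC))
        (mem_coe.mpr (filter_subset _ _ hC')) hCC').mono sdiff_subset sdiff_subset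
  have hsup : sparts.sup id = univ := by
    refine Finset.eq_univ_of_forall fun a => ?_
    rw [Finset.mem_sup]
    obtain ⟨C, hC, haC⟩ := π.exists_mem (mem_univ a)
    by_cases haK : a ∈ K
    · exact ⟨K, mem_insert_self _ _, haK⟩
    · refine ⟨C \ K, ?_, mem_sdiff.mpr ⟨haC, haK⟩⟩
      exact mem_insert_of_mem (mem_image_of_mem _
        (mem_filter.mpr ⟨hC, ⟨a, mem_sdiff.mpr ⟨haC, haK⟩⟩⟩))
  have hnb : (⊥ : Finset (Fin n)) ∉ sparts := by
    intro h
    rcases mem_insert.mp h with h | h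
    · exact hKne.ne_empty h.symm
    · obtain ⟨C, hC, hCe⟩ := mem_image.mp h
      exact ((mem_filter.mp hC).2).ne_empty hCe
  obtain ⟨σ, hσp⟩ : ∃ σ : Finpartition (univ : Finset (Fin n)), σ.parts = sparts :=
    ⟨⟨sparts, Finset.supIndep_iff_pairwiseDisjoint.mpr hsdisj, hsup, hnb⟩, rfl⟩
  -- welfare of both partitions
  have hW : ∀ D : Finset (Fin n), ∑ i ∈ D, faUtil n (R.F i) i D = Wq R.F D :=
    sum_faUtil R.F
  have hswπ : faSW n R.F π = ∑ C ∈ π.parts, Wq R.F C :=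
    Finset.sum_congr rfl fun C _ => hW C
  have hswσ : faSW n R.F σ = Wq R.F K + ∑ C ∈ π.parts, Wq R.F (C \ K) := by
    have h1 : faSW n R.F σ = ∑ D ∈ sparts, Wq R.F D := by
      rw [show faSW n R.F σ = ∑ D ∈ σ.parts, ∑ i ∈ D, faUtil n (R.F i) i D from rfl, hσp]
      exact Finset.sum_congr rfl fun D _ => hW D
    rw [h1, hspdef, Finset.sum_insert timg_ne, Finset.sum_image hinj]
    congr 1
    refine Finset.sum_subset (filter_subset _ _) fun C hC hCt => ?_
    have he : C \ K = ∅ :=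
      not_nonempty_iff_eq_empty.mp fun hne => hCt (mem_filter.mpr ⟨hC, hne⟩)
    rw [he]
    simp [Wq, fp, ep]
  have hineq := hopt σ
  rw [hswσ, hswπ] at hineq
  have hstep : Wq R.F K ≤ ∑ C ∈ π.parts, (Wq R.F C - Wq R.F (C \ K)) := by
    rw [Finset.sum_sub_distrib]; linarith
  -- per-part bound
  have hnQ : (0:ℚ) ≤ (n : ℚ) := by positivity
  have hpart : ∀ C ∈ π.parts, Wq R.F C - Wq R.F (C \ K) ≤
      ((fp R.F (C ∩ K) (C ∩ K) + fp R.F (C ∩ K) (C \ K) + fp R.F (C \ K) (C ∩ K) : ℕ) : ℚ) := by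
    intro C _
    have hdisj : Disjoint (C \ K) (C ∩ K) := Finset.disjoint_sdiff_inter C K
    have hun : C \ K ∪ C ∩ K = C := Finset.sdiff_union_inter C K
    have hfp : fp R.F C C = fp R.F (C \ K) (C \ K) + fp R.F (C \ K) (C ∩ K)
        + fp R.F (C ∩ K) (C \ K) + fp R.F (C ∩ K) (C ∩ K) := by
      conv_lhs => rw [← hun]
      rw [fp_union_left R.F hdisj, fp_union_right R.F _ hdisj, fp_union_right R.F _ hdisj]
      ring
    have hep : ep R.F C C = ep R.F (C \ K) (C \ K) + ep R.F (C \ K) (C ∩ K)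
        + ep R.F (C ∩ K) (C \ K) + ep R.F (C ∩ K) (C ∩ K) := by
      conv_lhs => rw [← hun]
      rw [ep_union_left R.F hdisj, ep_union_right R.F _ hdisj, ep_union_right R.F _ hdisj]
      ring
    have key : Wq R.F C - Wq R.F (C \ K) =
        ((fp R.F (C ∩ K) (C ∩ K) + fp R.F (C ∩ K) (C \ K) + fp R.F (C \ K) (C ∩ K) : ℕ) : ℚ)
        - ((ep R.F (C ∩ K) (C ∩ K) + ep R.F (C ∩ K) (C \ K) + ep R.F (C \ K) (C ∩ K) : ℕ) : ℚ)
          / (n : ℚ) := by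
      simp only [Wq]
      rw [hfp, hep]
      push_cast
      ring
    rw [key]
    have hpos : (0:ℚ) ≤
        ((ep R.F (C ∩ K) (C ∩ K) + ep R.F (C ∩ K) (C \ K) + ep R.F (C \ K) (C ∩ K) : ℕ) : ℚ)
          / (n : ℚ) := by positivity
    linarith
  have hfpKK : fp R.F K K = X * (X - 1) := by
    rw [fp_clique R.F R.irrefl hcl, hKcard]
  have hWK : Wq R.F K = ((X * (X - 1) : ℕ) : ℚ) := by
    simp only [Wq]
    rw [hfpKK, ep_clique R.F hcl]
    simp
  have hsum_bound : ((X * (X - 1) : ℕ) : ℚ) ≤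
      ((∑ C ∈ π.parts, (fp R.F (C ∩ K) (C ∩ K) + fp R.F (C ∩ K) (C \ K)
        + fp R.F (C \ K) (C ∩ K)) : ℕ) : ℚ) := by
    rw [Nat.cast_sum]
    calc ((X * (X - 1) : ℕ) : ℚ) = Wq R.F K := hWK.symm
      _ ≤ ∑ C ∈ π.parts, (Wq R.F C - Wq R.F (C \ K)) := hstep
      _ ≤ _ := Finset.sum_le_sum hpart
  have hNat : X * (X - 1) ≤ ∑ C ∈ π.parts, (fp R.F (C ∩ K) (C ∩ K)
      + fp R.F (C ∩ K) (C \ K) + fp R.F (C \ K) (C ∩ K)) := by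
    exact_mod_cast hsum_bound
  rw [Finset.sum_add_distrib, Finset.sum_add_distrib] at hNat
  -- bound the three sums
  have hcards : ∑ C ∈ π.parts, (C ∩ K).card = X := by
    have h := sum_parts_inter π K (fun _ => 1)
    simp only [Finset.sum_const, smul_eq_mul, mul_one] at h
    exact h.trans hKcard
  have hple : ∀ C ∈ π.parts, (C ∩ K).card ≤ X - 1 := by
    intro C hC
    have hsub : C ∩ K ⊆ K := inter_subset_right
    have hlt : (C ∩ K).card < K.card := by
      rcases lt_or_eq_of_le (card_le_card hsub) with h | h
      · exact h
      · exfalso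
        have heq : C ∩ K = K := Finset.eq_of_subset_of_card_le hsub (le_of_eq h.symm)
        have : K ⊆ C := by rw [← heq]; exact inter_subset_left
        exact hcon C hC this
    rw [hKcard] at hlt
    omega
  have hb1 : ∑ C ∈ π.parts, fp R.F (C ∩ K) (C ∩ K) ≤ (X - 2) * X := by
    have h1 : ∀ C ∈ π.parts, fp R.F (C ∩ K) (C ∩ K) ≤ (X - 2) * (C ∩ K).card := by
      intro C hC
      have hcl' : ∀ a ∈ C ∩ K, ∀ b ∈ C ∩ K, a ≠ b → b ∈ R.F a := fun a ha b hb hab =>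
        hcl a (inter_subset_right ha) b (inter_subset_right hb) hab
      rw [fp_clique R.F R.irrefl hcl']
      have h2 := hple C hC
      have h3 : (C ∩ K).card - 1 ≤ X - 2 := by omega
      calc (C ∩ K).card * ((C ∩ K).card - 1) ≤ (C ∩ K).card * (X - 2) :=
            Nat.mul_le_mul_left _ h3
        _ = (X - 2) * (C ∩ K).card := Nat.mul_comm _ _
    calc ∑ C ∈ π.parts, fp R.F (C ∩ K) (C ∩ K)
        ≤ ∑ C ∈ π.parts, (X - 2) * (C ∩ K).card := Finset.sum_le_sum h1
      _ = (X - 2) * X := by rw [← Finset.mul_sum, hcards]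
  -- friend edges between K and the rest: exactly m*T
  have hpd1 : ((univ : Finset (Fin (3 * m))) : Set (Fin (3 * m))).PairwiseDisjoint R.elemClique :=
    fun h _ h' _ hne => R.elem_disj h h' hne
  have hpd2 : ((univ : Finset (Fin m)) : Set (Fin m)).PairwiseDisjoint R.setClique :=
    fun k _ k' _ hne => R.set_disj k k' hne
  have hB1 : fp R.F (univ.biUnion R.elemClique) K = m * T := by
    rw [show fp R.F (univ.biUnion R.elemClique) K
        = ∑ i ∈ univ.biUnion R.elemClique, (K ∩ R.F i).card from rfl,
      Finset.sum_biUnion hpd1]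
    calc ∑ h, ∑ a ∈ R.elemClique h, (K ∩ R.F a).card
        = ∑ h, x h := Finset.sum_congr rfl fun h _ => by
          rw [Finset.sum_congr rfl fun a ha => hmatch h a ha]
          simp [R.elem_card h]
      _ = m * T := hsum
  have hB2 : fp R.F (univ.biUnion R.setClique) K = X * (X - 1) := by
    rw [show fp R.F (univ.biUnion R.setClique) K
        = ∑ i ∈ univ.biUnion R.setClique, (K ∩ R.F i).card from rfl,
      Finset.sum_biUnion hpd2]
    rw [Finset.sum_eq_single_of_mem j (mem_univ j) (fun k _ hk =>
      Finset.sum_eq_zero fun a ha => by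
        rw [Finset.card_eq_zero]
        exact eq_empty_iff_forall_notMem.mpr fun b hb =>
          hss k hk a ha b (mem_inter.mp hb).1 (mem_inter.mp hb).2)]
    exact hfpKK
  have hdB : Disjoint (univ.biUnion R.elemClique) (univ.biUnion R.setClique) := by
    simp only [Finset.disjoint_biUnion_left, Finset.disjoint_biUnion_right]
    intro k _ h _
    exact R.elem_set_disj h k
  have hA : fp R.F (univ : Finset (Fin n)) K = m * T + X * (X - 1) := by
    conv_lhs => rw [show (univ : Finset (Fin n))
      = univ.biUnion R.elemClique ∪ univ.biUnion R.setClique from R.cover.symm]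
    rw [fp_union_left R.F hdB, hB1, hB2]
  have hout : fp R.F ((univ : Finset (Fin n)) \ K) K = m * T := by
    have h2 : fp R.F (((univ : Finset (Fin n)) \ K) ∪ K) K
        = fp R.F ((univ : Finset (Fin n)) \ K) K + fp R.F K K :=
      fp_union_left R.F sdiff_disjoint K
    rw [sdiff_union_of_subset (subset_univ K), hA, hfpKK] at h2
    omega
  have hout' : fp R.F K ((univ : Finset (Fin n)) \ K) = m * T := by
    rw [fp_comm R.F R.symm]; exact hout
  have hsubU : ∀ C : Finset (Fin n), C \ K ⊆ (univ : Finset (Fin n)) \ K :=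
    fun C => sdiff_subset_sdiff (subset_univ C) (Finset.Subset.refl _)
  have hsum2 : ∑ C ∈ π.parts, fp R.F (C ∩ K) ((univ : Finset (Fin n)) \ K)
      = fp R.F K ((univ : Finset (Fin n)) \ K) :=
    sum_parts_inter π K (fun i => (((univ : Finset (Fin n)) \ K) ∩ R.F i).card)
  have hb2 : ∑ C ∈ π.parts, fp R.F (C ∩ K) (C \ K) ≤ m * T := by
    calc ∑ C ∈ π.parts, fp R.F (C ∩ K) (C \ K)
        ≤ ∑ C ∈ π.parts, fp R.F (C ∩ K) ((univ : Finset (Fin n)) \ K) :=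
          Finset.sum_le_sum fun C _ => fp_mono_right R.F _ (hsubU C)
      _ = m * T := hsum2.trans hout'
  have hb3 : ∑ C ∈ π.parts, fp R.F (C \ K) (C ∩ K) ≤ m * T := by
    calc ∑ C ∈ π.parts, fp R.F (C \ K) (C ∩ K)
        = ∑ C ∈ π.parts, fp R.F (C ∩ K) (C \ K) :=
          Finset.sum_congr rfl fun C _ => fp_comm R.F R.symm _ _
      _ ≤ m * T := hb2
  have hfinal : X * (X - 1) ≤ (X - 2) * X + (m * T + m * T) := by
    calc X * (X - 1) ≤ _ := hNat
      _ ≤ (X - 2) * X + (m * T + m * T) := by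
        have := add_le_add (add_le_add hb1 hb2) hb3
        linarith
  -- contradiction:  X = 4m²T  forces  X ≤ 2mT
  have hX4 : 4 ≤ X := by
    have h1 : 1 ≤ m ^ 2 := Nat.one_le_pow _ _ hm
    calc 4 = 4 * 1 * 1 := by ring
      _ ≤ 4 * m ^ 2 * T := by
        apply Nat.mul_le_mul _ hT
        exact Nat.mul_le_mul_left 4 h1
  obtain ⟨Y, hY⟩ : ∃ Y, X = Y + 2 := ⟨X - 2, by omega⟩
  have e1 : X - 1 = Y + 1 := by omega
  have e2 : X - 2 = Y := by omega
  rw [e1, e2, hY] at hfinal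
  have e3 : (Y + 2) * (Y + 1) = Y * (Y + 2) + (Y + 2) := by ring
  rw [e3] at hfinal
  have hXle : X ≤ m * T + m * T := by
    rw [hY]
    exact Nat.le_of_add_le_add_left hfinal
  have h2m : 2 * m < 4 * m ^ 2 := by
    calc 2 * m < 4 * m := by omega
      _ ≤ 4 * m * m := Nat.le_mul_of_pos_right _ hm
      _ = 4 * m ^ 2 := by ring
  have hlt : m * T + m * T < X := by
    have : (2 * m) * T < (4 * m ^ 2) * T := Nat.mul_lt_mul_of_pos_right h2m hT
    calc m * T + m * T = (2 * m) * T := by ring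
      _ < (4 * m ^ 2) * T := this
      _ = X := by rw [hXdef]
  exact absurd hXle (Nat.not_le.mpr hlt)
end

section
/- In the reduced FA instance with m > 1, if π* is an optimal partition, then for each h ∈ [3m] there exists a coalition C ∈ π* with K^h ⊆ C (no element-clique is split across coalitions). -/
/-!
The welfare of a partition `π` is `Σᵢ |Fᵢ| - cut(π) - e(π) / n`, where `cut(π)` counts the
friendships that `π` separates and `e(π)` the enemy pairs it puts together. Comparing an optimal
`π` with the partition into cliques gives `cut(π) ≤ 2m · Σ x_h = 2m²T`, whereas a split
set-clique alone separates at least `X = 4m²T` friendships; so every set-clique lies inside one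
coalition. Consequently all agents of an element-clique `K` have the same number of friends
outside `K` in any coalition `P`, namely the number of set-cliques inside `P`. If `K` met two
coalitions `C` and `D`, neither moving `C ∩ K` to `D` nor moving `D ∩ K` to `C` may increase
welfare; adding the two inequalities cancels the set-clique terms and leaves
`(n + 1)(|C ∩ K| + |D ∩ K|) ≤ |C| + |D|`, which is absurd.
-/
open Finset

namespace Finpartition

variable {α : Type*} [Fintype α] [DecidableEq α]

theorem exists_forall_part_eq (P : α → Finset α) (hmem : ∀ a, a ∈ P a)
    (hP : ∀ a b, b ∈ P a → P b = P a) :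
    ∃ σ : Finpartition (univ : Finset α), ∀ a, σ.part a = P a := by
  classical
  refine ⟨ofSetoid (Setoid.ker P), fun a => ?_⟩
  ext b
  rw [mem_part_ofSetoid_iff_rel]
  exact ⟨fun hab => hab ▸ hmem b, fun hb => (hP a b hb).symm⟩

open Function in
theorem exists_forall_part_eq_of_pairwiseDisjoint {ι : Type*} (K : ι → Finset α)
    (hK : Pairwise (Disjoint on K)) (hcover : ∀ a, ∃ j, a ∈ K j) :
    ∃ σ : Finpartition (univ : Finset α), ∀ j, ∀ a ∈ K j, σ.part a = K j := by
  choose f hf using hcover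
  have hf_eq : ∀ j, ∀ a ∈ K j, f a = j := fun j a ha =>
    hK.eq (not_disjoint_iff.2 ⟨a, hf a, ha⟩)
  obtain ⟨σ, hσ⟩ := exists_forall_part_eq (fun a => K (f a)) hf
    fun a b hb => by rw [hf_eq _ b hb]
  exact ⟨σ, fun j a ha => by rw [hσ, hf_eq j a ha]⟩

theorem exists_move (π : Finpartition (univ : Finset α)) {C D S : Finset α}
    (hC : C ∈ π.parts) (hD : D ∈ π.parts) (hCD : C ≠ D) (hS : S ⊆ C) :
    ∃ σ : Finpartition (univ : Finset α), (∀ a ∈ S ∪ D, σ.part a = S ∪ D) ∧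
      (∀ a ∈ C \ S, σ.part a = C \ S) ∧ ∀ a ∉ C ∪ D, σ.part a = π.part a := by
  have hdisj : Disjoint C D := π.disjoint hC hD hCD
  set P : α → Finset α := fun a =>
    if a ∈ S ∪ D then S ∪ D else if a ∈ C then C \ S else π.part a
  have hPSD : ∀ a ∈ S ∪ D, P a = S ∪ D := fun a ha => if_pos ha
  have hPC : ∀ a ∈ C \ S, P a = C \ S := fun a ha => by
    obtain ⟨haC, haS⟩ := mem_sdiff.1 ha
    simp [P, haC, haS, disjoint_left.1 hdisj haC]
  have hPout : ∀ a ∉ C ∪ D, P a = π.part a := fun a ha => by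
    obtain ⟨haC, haD⟩ := not_or.1 (mem_union.not.1 ha)
    have haS : a ∉ S := fun h => haC (hS h)
    simp [P, haC, haD, haS]
  have hCD_eq : C ∪ D = (C \ S) ∪ (S ∪ D) := by rw [← union_assoc, sdiff_union_of_subset hS]
  have hpart : ∀ {a b}, b ∈ π.part a → π.part b = π.part a := fun hb =>
    π.part_eq_of_mem (π.part_mem.2 (mem_univ _)) hb
  have hP_of_mem : ∀ a b, b ∈ P a → P b = P a := by
    intro a b hb
    by_cases ha : a ∈ C ∪ D
    · rw [hCD_eq, mem_union] at ha
      rcases ha with ha | ha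
      · rw [hPC a ha] at hb ⊢; exact hPC b hb
      · rw [hPSD a ha] at hb ⊢; exact hPSD b hb
    · rw [hPout a ha] at hb ⊢
      have hb' : b ∉ C ∪ D := fun hbCD => ha <| by
        rcases mem_union.1 hbCD with h | h
        · exact mem_union_left _
            (π.part_eq_of_mem hC h ▸ hpart hb ▸ π.mem_part (mem_univ a))
        · exact mem_union_right _
            (π.part_eq_of_mem hD h ▸ hpart hb ▸ π.mem_part (mem_univ a))
      rw [hPout b hb', hpart hb]
  have hP_self : ∀ a, a ∈ P a := fun a => by
    by_cases ha : a ∈ C ∪ D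
    · rw [hCD_eq, mem_union] at ha
      rcases ha with ha | ha
      · rw [hPC a ha]; exact ha
      · rw [hPSD a ha]; exact ha
    · rw [hPout a ha]; exact π.mem_part (mem_univ a)
  obtain ⟨σ, hσ⟩ := exists_forall_part_eq P hP_self hP_of_mem
  exact ⟨σ, fun a ha => (hσ a).trans (hPSD a ha), fun a ha => (hσ a).trans (hPC a ha),
    fun a ha => (hσ a).trans (hPout a ha)⟩

theorem exists_mem_parts_superset [Nonempty α] (P : Finpartition (univ : Finset α))
    {K : Finset α} (hK : ∀ a ∈ K, K ⊆ P.part a) : ∃ C ∈ P.parts, K ⊆ C := by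
  obtain rfl | ⟨a, ha⟩ := K.eq_empty_or_nonempty
  · obtain ⟨a⟩ := ‹Nonempty α›
    exact ⟨_, P.part_mem.2 (mem_univ a), empty_subset _⟩
  · exact ⟨_, P.part_mem.2 (mem_univ a), hK a ha⟩

end Finpartition

section FriendsAppreciation

variable {n : ℕ} (F : Fin n → Finset (Fin n))

def faWelfare (C : Finset (Fin n)) : ℚ :=
  ∑ i ∈ C, faUtil n (F i) i C

def friendCount (A B : Finset (Fin n)) : ℕ :=
  ∑ i ∈ A, (B ∩ F i).card

def cutSize (π : Finpartition (univ : Finset (Fin n))) : ℕ :=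
  ∑ i, (F i \ π.part i).card

def IsFAOptimal (π : Finpartition (univ : Finset (Fin n))) : Prop :=
  ∀ σ : Finpartition (univ : Finset (Fin n)), faSW n F σ ≤ faSW n F π

variable {F}

theorem friendCount_comm (hF : ∀ a b, a ∈ F b → b ∈ F a) (A B : Finset (Fin n)) :
    friendCount F A B = friendCount F B A := by
  have h : ∀ A B : Finset (Fin n),
      friendCount F A B = ∑ i ∈ A, ∑ j ∈ B, if j ∈ F i then 1 else 0 := fun A B =>
    sum_congr rfl fun i _ => by rw [sum_boole, Nat.cast_id, filter_mem_eq_inter]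
  rw [h, h, sum_comm]
  exact sum_congr rfl fun j _ => sum_congr rfl fun i _ =>
    if_congr ⟨hF j i, hF i j⟩ rfl rfl

theorem cast_card_inter_eq_sub (C t : Finset (Fin n)) :
    ((C ∩ t).card : ℚ) = t.card - (t \ C).card := by
  rw [inter_comm, eq_sub_iff_add_eq]
  exact_mod_cast card_inter_add_card_sdiff t C

theorem faUtil_le (t : Finset (Fin n)) (i : Fin n) (C : Finset (Fin n)) :
    faUtil n t i C ≤ t.card - (t \ C).card := by
  rw [faUtil, cast_card_inter_eq_sub, sub_le_self_iff]
  positivity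

theorem faUtil_eq_of_subset_insert {t C : Finset (Fin n)} {i : Fin n} (hC : C ⊆ insert i t) :
    faUtil n t i C = t.card - (t \ C).card := by
  have h0 : C \ (t ∪ {i}) = ∅ :=
    sdiff_eq_empty_iff_subset.2 (by rwa [union_comm, ← insert_eq])
  rw [faUtil, cast_card_inter_eq_sub, h0, card_empty, Nat.cast_zero, zero_div, sub_zero]

theorem faUtil_union (t : Finset (Fin n)) (i : Fin n) {A B : Finset (Fin n)}
    (hAB : Disjoint A B) (hiB : i ∉ B) :
    faUtil n t i (A ∪ B) = faUtil n t i A + (B ∩ t).card - (B \ t).card / n := by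
  have hB : B \ (t ∪ {i}) = B \ t := by
    ext b
    simp only [mem_sdiff, mem_union, mem_singleton]
    exact ⟨fun hb => ⟨hb.1, fun h => hb.2 (Or.inl h)⟩,
      fun hb => ⟨hb.1, by rintro (h | rfl); exacts [hb.2 h, hiB hb.1]⟩⟩
  have hinter : ((A ∪ B) ∩ t).card = (A ∩ t).card + (B ∩ t).card := by
    rw [union_inter_distrib_right,
      card_union_of_disjoint (hAB.mono inter_subset_left inter_subset_left)]
  have hsdiff : ((A ∪ B) \ (t ∪ {i})).card = (A \ (t ∪ {i})).card + (B \ t).card := by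
    rw [union_sdiff_distrib, card_union_of_disjoint (hAB.mono sdiff_subset sdiff_subset), hB]
  simp only [faUtil, hinter, hsdiff]
  push_cast
  ring

theorem sum_card_sdiff_friends (A B : Finset (Fin n)) :
    ∑ i ∈ A, ((B \ F i).card : ℚ) = A.card * B.card - friendCount F A B := by
  have h : ∀ i, ((B \ F i).card : ℚ) = B.card - (B ∩ F i).card := fun i => by
    rw [inter_comm, cast_card_inter_eq_sub]
    ring
  simp only [h, sum_sub_distrib, sum_const, nsmul_eq_mul, friendCount, Nat.cast_sum]

theorem faWelfare_union (hF : ∀ a b, a ∈ F b → b ∈ F a) {A B : Finset (Fin n)}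
    (hAB : Disjoint A B) :
    faWelfare F (A ∪ B) = faWelfare F A + faWelfare F B + 2 * friendCount F A B
      - 2 * (A.card * B.card - friendCount F A B) / n := by
  have hA : ∑ i ∈ A, faUtil n (F i) i (A ∪ B)
      = ∑ i ∈ A, (faUtil n (F i) i A + (B ∩ F i).card - (B \ F i).card / n) :=
    sum_congr rfl fun i hi => faUtil_union (F i) i hAB (disjoint_left.1 hAB hi)
  have hB : ∑ i ∈ B, faUtil n (F i) i (A ∪ B)
      = ∑ i ∈ B, (faUtil n (F i) i B + (A ∩ F i).card - (A \ F i).card / n) := by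
    rw [union_comm]
    exact sum_congr rfl fun i hi => faUtil_union (F i) i hAB.symm (disjoint_right.1 hAB hi)
  rw [faWelfare, sum_union hAB, hA, hB]
  simp only [sum_sub_distrib, sum_add_distrib, ← sum_div, sum_card_sdiff_friends]
  have hAB' : ∑ i ∈ A, ((B ∩ F i).card : ℚ) = friendCount F A B := by simp [friendCount]
  have hBA : ∑ i ∈ B, ((A ∩ F i).card : ℚ) = friendCount F A B := by
    rw [friendCount_comm hF]; simp [friendCount]
  rw [hAB', hBA, friendCount_comm hF B A, faWelfare, faWelfare]
  ring

theorem faSW_eq_sum_part (π : Finpartition (univ : Finset (Fin n))) :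
    faSW n F π = ∑ i, faUtil n (F i) i (π.part i) := by
  have h := sum_biUnion (f := fun i => faUtil n (F i) i (π.part i)) π.supIndep.pairwiseDisjoint
  rw [π.biUnion_parts] at h
  rw [h, faSW]
  exact sum_congr rfl fun C hC => sum_congr rfl fun i hi => by rw [π.part_eq_of_mem hC hi]

theorem faSW_le_sub_cutSize (π : Finpartition (univ : Finset (Fin n))) :
    faSW n F π ≤ ∑ i, ((F i).card : ℚ) - cutSize F π := by
  rw [faSW_eq_sum_part, cutSize, Nat.cast_sum, ← sum_sub_distrib]
  exact sum_le_sum fun i _ => faUtil_le _ _ _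

theorem faSW_eq_sub_cutSize {σ : Finpartition (univ : Finset (Fin n))}
    (hσ : ∀ i, σ.part i ⊆ insert i (F i)) :
    faSW n F σ = ∑ i, ((F i).card : ℚ) - cutSize F σ := by
  rw [faSW_eq_sum_part, cutSize, Nat.cast_sum, ← sum_sub_distrib]
  exact sum_congr rfl fun i _ => faUtil_eq_of_subset_insert (hσ i)

theorem IsFAOptimal.cutSize_le {π : Finpartition (univ : Finset (Fin n))}
    (hopt : IsFAOptimal F π) {σ : Finpartition (univ : Finset (Fin n))}
    (hσ : ∀ i, σ.part i ⊆ insert i (F i)) : cutSize F π ≤ cutSize F σ := by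
  have h := (faSW_eq_sub_cutSize hσ).symm.trans_le ((hopt σ).trans (faSW_le_sub_cutSize π))
  exact_mod_cast (sub_le_sub_iff_left _).1 h

theorem subset_part_of_cutSize_lt {π : Finpartition (univ : Finset (Fin n))}
    {K : Finset (Fin n)} (hK : ∀ a ∈ K, ∀ b ∈ K, a ≠ b → b ∈ F a)
    (hcut : cutSize F π < K.card) : ∀ a ∈ K, K ⊆ π.part a := by
  by_contra! h
  obtain ⟨a, ha, hKa⟩ := h
  obtain ⟨b, hb, hba⟩ := not_subset.1 hKa
  have hcut_i : ∀ i ∈ K, 1 ≤ (F i \ π.part i).card := fun i hi => by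
    have hKi : ¬ K ⊆ π.part i := fun hKi => hba <| by
      rw [π.part_eq_of_mem (π.part_mem.2 (mem_univ i)) (hKi ha)]; exact hKi hb
    obtain ⟨j, hj, hji⟩ := not_subset.1 hKi
    have hij : i ≠ j := fun h => hji (h ▸ π.mem_part (mem_univ i))
    exact card_pos.2 ⟨j, mem_sdiff.2 ⟨hK i hi j hj hij, hji⟩⟩
  refine hcut.not_ge ?_
  calc K.card = ∑ _i ∈ K, 1 := card_eq_sum_ones K
    _ ≤ ∑ i ∈ K, (F i \ π.part i).card := sum_le_sum hcut_i
    _ ≤ cutSize F π := sum_le_sum_of_subset (subset_univ K)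

theorem exists_faSW_move (π : Finpartition (univ : Finset (Fin n)))
    {C D S : Finset (Fin n)} (hC : C ∈ π.parts) (hD : D ∈ π.parts) (hCD : C ≠ D)
    (hS : S ⊆ C) :
    ∃ σ : Finpartition (univ : Finset (Fin n)),
      faSW n F σ + faWelfare F C + faWelfare F D
        = faSW n F π + faWelfare F (C \ S) + faWelfare F (S ∪ D) := by
  have hdisj : Disjoint C D := π.disjoint hC hD hCD
  obtain ⟨σ, hσSD, hσC, hσout⟩ := π.exists_move hC hD hCD hS
  refine ⟨σ, ?_⟩
  have hrest : ∑ i ∈ univ \ (C ∪ D), faUtil n (F i) i (σ.part i)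
      = ∑ i ∈ univ \ (C ∪ D), faUtil n (F i) i (π.part i) :=
    sum_congr rfl fun i hi => by rw [hσout i (mem_sdiff.1 hi).2]
  have hnew : ∑ i ∈ C ∪ D, faUtil n (F i) i (σ.part i)
      = faWelfare F (C \ S) + faWelfare F (S ∪ D) := by
    rw [← sdiff_union_of_subset hS, union_assoc, sdiff_union_of_subset hS,
      sum_union (disjoint_union_right.2 ⟨sdiff_disjoint, hdisj.mono_left sdiff_subset⟩)]
    congr 1
    · exact sum_congr rfl fun i hi => by rw [hσC i hi]
    · exact sum_congr rfl fun i hi => by rw [hσSD i hi]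
  have hold : ∑ i ∈ C ∪ D, faUtil n (F i) i (π.part i) = faWelfare F C + faWelfare F D := by
    rw [sum_union hdisj]
    congr 1
    · exact sum_congr rfl fun i hi => by rw [π.part_eq_of_mem hC hi]
    · exact sum_congr rfl fun i hi => by rw [π.part_eq_of_mem hD hi]
  rw [faSW_eq_sum_part, faSW_eq_sum_part, ← sum_sdiff (subset_univ (C ∪ D)),
    ← sum_sdiff (subset_univ (C ∪ D)) (f := fun i => faUtil n (F i) i (π.part i)),
    hrest, hnew, hold]
  ring

-- Moving `S` from `C` to `D` changes the welfare by `2 / n` times the difference of the two sides.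
theorem IsFAOptimal.move_le (hF : ∀ a b, a ∈ F b → b ∈ F a)
    {π : Finpartition (univ : Finset (Fin n))} (hopt : IsFAOptimal F π)
    {C D S : Finset (Fin n)} (hC : C ∈ π.parts) (hD : D ∈ π.parts) (hCD : C ≠ D)
    (hS : S ⊆ C) :
    (n + 1) * friendCount F S D + S.card * (C \ S).card
      ≤ (n + 1) * friendCount F S (C \ S) + S.card * D.card := by
  obtain ⟨c, -⟩ := π.nonempty_of_mem_parts hC
  have hn : (0 : ℚ) < n := by exact_mod_cast c.pos
  obtain ⟨σ, hσ⟩ := exists_faSW_move (F := F) π hC hD hCD hS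
  have hWC : faWelfare F C = faWelfare F (S ∪ (C \ S)) := by rw [union_sdiff_of_subset hS]
  rw [faWelfare_union hF disjoint_sdiff] at hWC
  have hSD : Disjoint S D := Disjoint.mono_left hS (π.disjoint hC hD hCD)
  rw [faWelfare_union hF hSD] at hσ
  have key : 2 * (friendCount F S D : ℚ) - 2 * (S.card * D.card - friendCount F S D) / n
      ≤ 2 * (friendCount F S (C \ S) : ℚ)
        - 2 * (S.card * (C \ S).card - friendCount F S (C \ S)) / n := by
    linarith [hopt σ]
  have hq : ((n : ℚ) + 1) * friendCount F S D + S.card * (C \ S).card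
      ≤ ((n : ℚ) + 1) * friendCount F S (C \ S) + S.card * D.card := by
    have := mul_le_mul_of_nonneg_left key hn.le
    field_simp at this
    linarith
  exact_mod_cast hq

theorem IsFAOptimal.clique_move_le (hF : ∀ a b, a ∈ F b → b ∈ F a)
    {π : Finpartition (univ : Finset (Fin n))} (hopt : IsFAOptimal F π)
    {K : Finset (Fin n)} (hK : ∀ a ∈ K, ∀ b ∈ K, a ≠ b → b ∈ F a)
    {s : Finset (Fin n) → ℕ}
    (hs : ∀ P ∈ π.parts, ∀ a ∈ K, ((P \ K) ∩ F a).card = s P)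
    {C D : Finset (Fin n)} (hC : C ∈ π.parts) (hD : D ∈ π.parts) (hCD : C ≠ D)
    (hCK : (C ∩ K).Nonempty) :
    (n + 1) * ((D ∩ K).card + s D) ≤ (n + 1) * s C + D.card := by
  have hinside : friendCount F (C ∩ K) (C \ (C ∩ K)) = (C ∩ K).card * s C := by
    rw [friendCount, sdiff_inter_self_left]
    exact sum_const_nat fun a ha => hs C hC a (mem_inter.1 ha).2
  have hacross : friendCount F (C ∩ K) D = (C ∩ K).card * ((D ∩ K).card + s D) := by
    refine sum_const_nat fun a ha => ?_
    have haD : a ∉ D := disjoint_left.1 (π.disjoint hC hD hCD) (mem_inter.1 ha).1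
    have hDK : D ∩ K ⊆ F a := fun b hb =>
      hK a (mem_inter.1 ha).2 b (mem_inter.1 hb).2 fun hab => haD (hab ▸ (mem_inter.1 hb).1)
    rw [← card_inter_add_card_sdiff (D ∩ F a) K, inter_right_comm, inter_eq_left.2 hDK,
      ← sdiff_inter_right_comm, hs D hD a (mem_inter.1 ha).2]
  have hmove := hopt.move_le hF hC hD hCD (inter_subset_left : C ∩ K ⊆ C)
  rw [hinside, hacross] at hmove
  refine Nat.le_of_mul_le_mul_left ?_ (card_pos.2 hCK)
  nlinarith

theorem IsFAOptimal.clique_subset_part (hF : ∀ a b, a ∈ F b → b ∈ F a)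
    {π : Finpartition (univ : Finset (Fin n))} (hopt : IsFAOptimal F π)
    {K : Finset (Fin n)} (hK : ∀ a ∈ K, ∀ b ∈ K, a ≠ b → b ∈ F a)
    {s : Finset (Fin n) → ℕ}
    (hs : ∀ P ∈ π.parts, ∀ a ∈ K, ((P \ K) ∩ F a).card = s P) :
    ∀ a ∈ K, K ⊆ π.part a := by
  by_contra! h
  obtain ⟨a, ha, hKa⟩ := h
  obtain ⟨b, hb, hba⟩ := not_subset.1 hKa
  have hC := π.part_mem.2 (mem_univ a)
  have hD := π.part_mem.2 (mem_univ b)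
  have hCD : π.part a ≠ π.part b := fun h => hba (h ▸ π.mem_part (mem_univ b))
  have haC : a ∈ π.part a ∩ K := mem_inter.2 ⟨π.mem_part (mem_univ a), ha⟩
  have hbD : b ∈ π.part b ∩ K := mem_inter.2 ⟨π.mem_part (mem_univ b), hb⟩
  have h₁ := hopt.clique_move_le hF hK hs hC hD hCD ⟨a, haC⟩
  have h₂ := hopt.clique_move_le hF hK hs hD hC hCD.symm ⟨b, hbD⟩
  have hc := card_pos.2 ⟨a, haC⟩
  have hd := card_pos.2 ⟨b, hbD⟩
  have := card_finset_fin_le (π.part a)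
  have := card_finset_fin_le (π.part b)
  nlinarith

end FriendsAppreciation

namespace ReducedFA

variable {m T n : ℕ} {x : Fin (3 * m) → ℕ} (R : ReducedFA m T n x)

def setAgents : Finset (Fin n) := univ.biUnion R.setClique

def IsCliquePartition (σ : Finpartition (univ : Finset (Fin n))) : Prop :=
  (∀ h, ∀ a ∈ R.elemClique h, σ.part a = R.elemClique h) ∧
    ∀ k, ∀ b ∈ R.setClique k, σ.part b = R.setClique k

theorem elemAgents_union_setAgents : R.elemAgents ∪ R.setAgents = univ := R.cover

theorem disjoint_elemAgents_setAgents : Disjoint R.elemAgents R.setAgents := by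
  simp only [elemAgents, setAgents, disjoint_biUnion_left, disjoint_biUnion_right]
  exact fun _ _ _ _ => R.elem_set_disj _ _

theorem mem_elemAgents_or_mem_setAgents (a : Fin n) : a ∈ R.elemAgents ∨ a ∈ R.setAgents := by
  rw [← mem_union, R.elemAgents_union_setAgents]
  exact mem_univ a

theorem card_elemAgents : R.elemAgents.card = ∑ h, x h := by
  rw [elemAgents, card_biUnion fun h _ h' _ hh' => R.elem_disj h h' hh']
  exact sum_congr rfl fun h _ => R.elem_card h

theorem friends_sdiff_elemClique {h : Fin (3 * m)} {a : Fin n} (ha : a ∈ R.elemClique h) :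
    R.F a \ R.elemClique h = R.setAgents ∩ R.F a := by
  ext b
  simp only [mem_sdiff, mem_inter]
  constructor
  · rintro ⟨hbF, hbK⟩
    refine ⟨(R.mem_elemAgents_or_mem_setAgents b).resolve_left fun hbE => ?_, hbF⟩
    obtain ⟨h', -, hb⟩ := mem_biUnion.1 hbE
    exact R.elem_elem h h' (fun e => hbK (e ▸ hb)) a ha b hb hbF
  · rintro ⟨hbS, hbF⟩
    exact ⟨hbF, fun hbK => disjoint_left.1 R.disjoint_elemAgents_setAgents
      (mem_biUnion.2 ⟨h, mem_univ _, hbK⟩) hbS⟩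

theorem friends_sdiff_setClique {k : Fin m} {b : Fin n} (hb : b ∈ R.setClique k) :
    R.F b \ R.setClique k = R.elemAgents ∩ R.F b := by
  ext a
  simp only [mem_sdiff, mem_inter]
  constructor
  · rintro ⟨haF, haK⟩
    refine ⟨(R.mem_elemAgents_or_mem_setAgents a).resolve_right fun haS => ?_, haF⟩
    obtain ⟨k', -, ha⟩ := mem_biUnion.1 haS
    exact R.set_set k k' (fun e => haK (e ▸ ha)) b hb a ha haF
  · rintro ⟨haE, haF⟩
    exact ⟨haF, fun haK => disjoint_left.1 R.disjoint_elemAgents_setAgents haE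
      (mem_biUnion.2 ⟨k, mem_univ _, haK⟩)⟩

theorem card_setAgents_inter_friends {h : Fin (3 * m)} {a : Fin n} (ha : a ∈ R.elemClique h) :
    (R.setAgents ∩ R.F a).card = m := by
  rw [setAgents, biUnion_inter, card_biUnion fun k _ l _ hkl =>
    (R.set_disj k l hkl).mono inter_subset_left inter_subset_left]
  simp [R.matching h _ a ha]

theorem exists_isCliquePartition : ∃ σ, R.IsCliquePartition σ := by
  have hdisj : Pairwise (Function.onFun Disjoint (Sum.elim R.elemClique R.setClique)) := by
    rintro (h | k) (h' | k') hne
    · exact R.elem_disj h h' fun e => hne (e ▸ rfl)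
    · exact R.elem_set_disj h k'
    · exact (R.elem_set_disj h' k).symm
    · exact R.set_disj k k' fun e => hne (e ▸ rfl)
  have hcover : ∀ a, ∃ j, a ∈ Sum.elim R.elemClique R.setClique j := fun a => by
    rcases R.mem_elemAgents_or_mem_setAgents a with ha | ha <;>
      obtain ⟨j, -, hj⟩ := mem_biUnion.1 ha
    exacts [⟨.inl j, hj⟩, ⟨.inr j, hj⟩]
  obtain ⟨σ, hσ⟩ := Finpartition.exists_forall_part_eq_of_pairwiseDisjoint _ hdisj hcover
  exact ⟨σ, fun h => hσ (.inl h), fun k => hσ (.inr k)⟩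

variable {R}

theorem IsCliquePartition.part_subset_insert {σ : Finpartition (univ : Finset (Fin n))}
    (hσ : R.IsCliquePartition σ) (i : Fin n) : σ.part i ⊆ insert i (R.F i) := by
  intro b hb
  rw [mem_insert]
  refine (eq_or_ne b i).imp_right fun hbi => ?_
  rcases R.mem_elemAgents_or_mem_setAgents i with hi | hi <;>
    obtain ⟨j, -, hj⟩ := mem_biUnion.1 hi
  · rw [hσ.1 j i hj] at hb
    exact R.elem_clique j i hj b hb hbi.symm
  · rw [hσ.2 j i hj] at hb
    exact R.set_clique j i hj b hb hbi.symm

theorem IsCliquePartition.cutSize_eq {σ : Finpartition (univ : Finset (Fin n))}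
    (hσ : R.IsCliquePartition σ) : cutSize R.F σ = 2 * (m * ∑ h, x h) := by
  have hE : ∑ i ∈ R.elemAgents, (R.F i \ σ.part i).card
      = friendCount R.F R.elemAgents R.setAgents := sum_congr rfl fun i hi => by
    obtain ⟨h, -, hh⟩ := mem_biUnion.1 hi
    rw [hσ.1 h i hh, R.friends_sdiff_elemClique hh]
  have hS : ∑ i ∈ R.setAgents, (R.F i \ σ.part i).card
      = friendCount R.F R.setAgents R.elemAgents := sum_congr rfl fun i hi => by
    obtain ⟨k, -, hk⟩ := mem_biUnion.1 hi
    rw [hσ.2 k i hk, R.friends_sdiff_setClique hk]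
  have hcount : friendCount R.F R.elemAgents R.setAgents = m * ∑ h, x h := by
    rw [friendCount, sum_const_nat fun i hi => ?_, R.card_elemAgents, mul_comm]
    obtain ⟨h, -, hh⟩ := mem_biUnion.1 hi
    exact R.card_setAgents_inter_friends hh
  have hsplit := sum_union R.disjoint_elemAgents_setAgents (f := fun i => (R.F i \ σ.part i).card)
  rw [R.elemAgents_union_setAgents] at hsplit
  rw [cutSize, hsplit, hE, hS, friendCount_comm R.symm R.setAgents, hcount, two_mul]

theorem card_sdiff_elemClique_inter_friends {π : Finpartition (univ : Finset (Fin n))}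
    (hset : ∀ k, ∀ b ∈ R.setClique k, R.setClique k ⊆ π.part b)
    {P : Finset (Fin n)} (hP : P ∈ π.parts) {h : Fin (3 * m)} {a : Fin n}
    (ha : a ∈ R.elemClique h) :
    ((P \ R.elemClique h) ∩ R.F a).card = #{k | R.setClique k ⊆ P} := by
  have hterm : ∀ k,
      (P ∩ (R.setClique k ∩ R.F a)).card = if R.setClique k ⊆ P then 1 else 0 := by
    intro k
    split_ifs with hk
    · rw [inter_eq_right.2 (inter_subset_left.trans hk), R.matching h k a ha]
    · refine card_eq_zero.2 (disjoint_iff_inter_eq_empty.1 ?_)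
      refine disjoint_left.2 fun b hbP hb => hk ?_
      rw [← π.part_eq_of_mem hP hbP]
      exact hset k b (mem_inter.1 hb).1
  have hrw : (P \ R.elemClique h) ∩ R.F a = P ∩ (R.setAgents ∩ R.F a) := by
    rw [← R.friends_sdiff_elemClique ha, sdiff_inter_right_comm, inter_sdiff_assoc]
  rw [hrw, setAgents, biUnion_inter, inter_biUnion, card_biUnion fun k _ l _ hkl =>
    (R.set_disj k l hkl).mono (inter_subset_right.trans inter_subset_left)
      (inter_subset_right.trans inter_subset_left), card_filter]
  exact sum_congr rfl fun k _ => hterm k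

end ReducedFA

theorem stmt10_general (m T n : ℕ) (hT : 0 < T)
    (x : Fin (3 * m) → ℕ)
    (hsum : ∑ h, x h = m * T)
    (R : ReducedFA m T n x)
    (π : Finpartition (univ : Finset (Fin n)))
    (hopt : ∀ σ : Finpartition (univ : Finset (Fin n)), faSW n R.F σ ≤ faSW n R.F π) :
    ∀ h : Fin (3 * m), ∃ C ∈ π.parts, R.elemClique h ⊆ C := by
  intro h
  have hm : 0 < m := by have := h.pos; omega
  replace hopt : IsFAOptimal R.F π := hopt
  obtain ⟨σ, hσ⟩ := R.exists_isCliquePartition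
  have hcut : cutSize R.F π < 4 * m ^ 2 * T := by
    have := hopt.cutSize_le hσ.part_subset_insert
    rw [hσ.cutSize_eq, hsum] at this
    nlinarith [mul_pos (mul_pos hm hm) hT]
  have hset : ∀ k, ∀ b ∈ R.setClique k, R.setClique k ⊆ π.part b := fun k =>
    subset_part_of_cutSize_lt (R.set_clique k) (by rwa [R.set_card])
  obtain ⟨b, -⟩ : (R.setClique ⟨0, hm⟩).Nonempty := by
    rw [← card_pos, R.set_card]
    exact (Nat.zero_le _).trans_lt hcut
  have : Nonempty (Fin n) := ⟨b⟩
  exact π.exists_mem_parts_superset <| hopt.clique_subset_part R.symm (R.elem_clique h)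
    (s := fun P => #{k | R.setClique k ⊆ P})
    fun P hP a ha => R.card_sdiff_elemClique_inter_friends hset hP ha

/-- In the reduced FA instance with `m > 1`, every element-clique is entirely contained
in a single coalition of any optimal partition. -/
theorem stmt10 (m T n : ℕ) (hm : 1 < m) (hT : 0 < T)
    (x : Fin (3 * m) → ℕ)
    (hsum : ∑ h, x h = m * T)
    (hx : ∀ h, T < 4 * x h ∧ 2 * x h < T)
    (hn : n = m * T + 4 * m ^ 3 * T)
    (R : ReducedFA m T n x)
    (π : Finpartition (univ : Finset (Fin n)))
    (hopt : ∀ σ : Finpartition (univ : Finset (Fin n)), faSW n R.F σ ≤ faSW n R.F π) :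
    ∀ h : Fin (3 * m), ∃ C ∈ π.parts, R.elemClique h ⊆ C :=
  stmt10_general m T n hT x hsum R π hopt
end
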